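/- arXiv:2211.03275 — 8 statements merged into one kernel-verified Lean document; each statement's English description precedes it below -/
import Mathlib

section
/- Let Ω ⊆ ℝ² be open and let φ : Ω → ℝ be a BI soliton with graph X(x,y) = (x, y, φ(x,y)). Set E := ⟨X_x,X_x⟩_B = 1 + φ_x², F := ⟨X_x,X_y⟩_B = φ_xφ_y, G := ⟨X_y,X_y⟩_B = −1 + φ_y², let N := (−φ_x, φ_y, 1)/√(1 + φ_x² − φ_y²), and set L := ⟨X_xx, N⟩_B, M := ⟨X_xy, N⟩_B, P := ⟨X_yy, N⟩_B. Then the mean curvature H := (L·G − 2M·F + P·E)/(2(E·G − F²)) vanishes at every point of Ω; i.e., BI soliton surfaces are zero mean curvature surfaces in B³. -/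
noncomputable section

/-- The inner product of `B³`: `⟨v,w⟩_B = v₁w₁ − v₂w₂ + v₃w₃`. -/
def innB (v w : ℝ × ℝ × ℝ) : ℝ := v.1 * w.1 - v.2.1 * w.2.1 + v.2.2 * w.2.2

/-- Partial derivative of a scalar function on `ℝ²` in the first variable. -/
def pdx (f : ℝ × ℝ → ℝ) (p : ℝ × ℝ) : ℝ := fderiv ℝ f p (1, 0)

/-- Partial derivative of a scalar function on `ℝ²` in the second variable. -/
def pdy (f : ℝ × ℝ → ℝ) (p : ℝ × ℝ) : ℝ := fderiv ℝ f p (0, 1)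

/-- Partial derivative of a vector-valued map on `ℝ²` in the first variable. -/
def vdx (X : ℝ × ℝ → ℝ × ℝ × ℝ) (p : ℝ × ℝ) : ℝ × ℝ × ℝ := fderiv ℝ X p (1, 0)

/-- Partial derivative of a vector-valued map on `ℝ²` in the second variable. -/
def vdy (X : ℝ × ℝ → ℝ × ℝ × ℝ) (p : ℝ × ℝ) : ℝ × ℝ × ℝ := fderiv ℝ X p (0, 1)

lemma hasFDerivX (φ : ℝ × ℝ → ℝ) (q : ℝ × ℝ) (h : DifferentiableAt ℝ φ q) :
    HasFDerivAt (fun q : ℝ × ℝ => (q.1, q.2, φ q))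
      ((ContinuousLinearMap.fst ℝ ℝ ℝ).prod
        ((ContinuousLinearMap.snd ℝ ℝ ℝ).prod (fderiv ℝ φ q))) q :=
  HasFDerivAt.prodMk hasFDerivAt_fst (HasFDerivAt.prodMk hasFDerivAt_snd h.hasFDerivAt)

lemma vdxX (φ : ℝ × ℝ → ℝ) (q : ℝ × ℝ) (h : DifferentiableAt ℝ φ q) :
    vdx (fun q : ℝ × ℝ => (q.1, q.2, φ q)) q = (1, 0, pdx φ q) := by
  rw [vdx, (hasFDerivX φ q h).fderiv]; rfl

lemma vdyX (φ : ℝ × ℝ → ℝ) (q : ℝ × ℝ) (h : DifferentiableAt ℝ φ q) :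
    vdy (fun q : ℝ × ℝ => (q.1, q.2, φ q)) q = (0, 1, pdy φ q) := by
  rw [vdy, (hasFDerivX φ q h).fderiv]; rfl

lemma vdx_const_pair (a b : ℝ) (g : ℝ × ℝ → ℝ) (p : ℝ × ℝ) (h : DifferentiableAt ℝ g p) :
    vdx (fun q : ℝ × ℝ => ((a : ℝ), (b : ℝ), g q)) p = (0, 0, pdx g p) := by
  rw [vdx, ((HasFDerivAt.prodMk (hasFDerivAt_const a p) (HasFDerivAt.prodMk (hasFDerivAt_const b p) h.hasFDerivAt)).fderiv)]
  rfl

lemma vdy_const_pair (a b : ℝ) (g : ℝ × ℝ → ℝ) (p : ℝ × ℝ) (h : DifferentiableAt ℝ g p) :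
    vdy (fun q : ℝ × ℝ => ((a : ℝ), (b : ℝ), g q)) p = (0, 0, pdy g p) := by
  rw [vdy, ((HasFDerivAt.prodMk (hasFDerivAt_const a p) (HasFDerivAt.prodMk (hasFDerivAt_const b p) h.hasFDerivAt)).fderiv)]
  rfl

/-- BI soliton surfaces are zero mean curvature surfaces in `B³`. -/
theorem bi_soliton_zero_mean_curvature
    (Ω : Set (ℝ × ℝ)) (hΩ : IsOpen Ω) (φ : ℝ × ℝ → ℝ)
    (hφ : ContDiffOn ℝ 2 φ Ω)
    (hhyp : ∀ p ∈ Ω, 0 < 1 + (pdx φ p) ^ 2 - (pdy φ p) ^ 2)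
    (hBI : ∀ p ∈ Ω,
      (1 - (pdy φ p) ^ 2) * pdx (pdx φ) p + 2 * pdx φ p * pdy φ p * pdx (pdy φ) p
        - (1 + (pdx φ p) ^ 2) * pdy (pdy φ) p = 0) :
    ∀ p ∈ Ω,
      let X : ℝ × ℝ → ℝ × ℝ × ℝ := fun q => (q.1, q.2, φ q)
      let E : ℝ := innB (vdx X p) (vdx X p)
      let F : ℝ := innB (vdx X p) (vdy X p)
      let G : ℝ := innB (vdy X p) (vdy X p)
      let N : ℝ × ℝ × ℝ :=
        (Real.sqrt (1 + (pdx φ p) ^ 2 - (pdy φ p) ^ 2))⁻¹ • ((-(pdx φ p), pdy φ p, 1) : ℝ × ℝ × ℝ)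
      let L : ℝ := innB (vdx (vdx X) p) N
      let M : ℝ := innB (vdx (vdy X) p) N
      let P : ℝ := innB (vdy (vdy X) p) N
      (L * G - 2 * M * F + P * E) / (2 * (E * G - F ^ 2)) = 0 := by
  intro p hp
  have hdiff : ∀ q ∈ Ω, DifferentiableAt ℝ φ q := fun q hq =>
    (hφ.contDiffAt (hΩ.mem_nhds hq)).differentiableAt two_ne_zero
  have hC : ContDiffAt ℝ 1 (fderiv ℝ φ) p :=
    (hφ.contDiffAt (hΩ.mem_nhds hp)).fderiv_right (by norm_num)
  have hdx : DifferentiableAt ℝ (pdx φ) p := by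
    have := (hC.differentiableAt one_ne_zero).clm_apply
      (differentiableAt_const ((1 : ℝ), (0 : ℝ)))
    exact this
  have hdy : DifferentiableAt ℝ (pdy φ) p := by
    have := (hC.differentiableAt one_ne_zero).clm_apply
      (differentiableAt_const ((0 : ℝ), (1 : ℝ)))
    exact this
  intro X E F G N L M P
  have hvx : vdx X p = (1, 0, pdx φ p) := vdxX φ p (hdiff p hp)
  have hvy : vdy X p = (0, 1, pdy φ p) := vdyX φ p (hdiff p hp)
  have hevx : vdx X =ᶠ[nhds p] fun q => ((1 : ℝ), (0 : ℝ), pdx φ q) := by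
    filter_upwards [hΩ.mem_nhds hp] with q hq
    exact vdxX φ q (hdiff q hq)
  have hevy : vdy X =ᶠ[nhds p] fun q => ((0 : ℝ), (1 : ℝ), pdy φ q) := by
    filter_upwards [hΩ.mem_nhds hp] with q hq
    exact vdyX φ q (hdiff q hq)
  have hxx : vdx (vdx X) p = (0, 0, pdx (pdx φ) p) := by
    rw [vdx, hevx.fderiv_eq]
    exact vdx_const_pair 1 0 (pdx φ) p hdx
  have hxy : vdx (vdy X) p = (0, 0, pdx (pdy φ) p) := by
    rw [vdx, hevy.fderiv_eq]
    exact vdx_const_pair 0 1 (pdy φ) p hdy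
  have hyy : vdy (vdy X) p = (0, 0, pdy (pdy φ) p) := by
    rw [vdy, hevy.fderiv_eq]
    exact vdy_const_pair 0 1 (pdy φ) p hdy
  have hnum : L * G - 2 * M * F + P * E = 0 := by
    have hbi := hBI p hp
    simp only [L, M, P, E, F, G, N, hxx, hxy, hyy, hvx, hvy, innB, Prod.smul_fst,
      Prod.smul_snd, smul_eq_mul]
    linear_combination (-(Real.sqrt (1 + (pdx φ p) ^ 2 - (pdy φ p) ^ 2))⁻¹) * hbi
  rw [hnum, zero_div]
end
end

section
/- Let F, G : ℝ → ℝ be C², let X = (x,y,z) be the associated generalized Born–Infeld soliton surface, and define X̂(α,β) := X(α+β, α−β). Then for all (α,β) ∈ ℝ², writing r := α+β and s := α−β: ⟨X̂_α, X̂_α⟩_B = (1+rs)² F′(r) G′(s), ⟨X̂_β, X̂_β⟩_B = −(1+rs)² F′(r) G′(s), and ⟨X̂_α, X̂_β⟩_B = 0. In particular α = (r+s)/2 and β = (r−s)/2 are conformal parameters for X. -/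
noncomputable section

/-- `α = (r+s)/2`, `β = (r−s)/2` are conformal parameters for a generalized
Born–Infeld soliton surface: with `X̂(α,β) = X(α+β, α−β)` one has
`⟨X̂_α,X̂_α⟩_B = (1+rs)²F′(r)G′(s) = −⟨X̂_β,X̂_β⟩_B` and `⟨X̂_α,X̂_β⟩_B = 0`. -/
theorem generalized_bi_conformal_parameters
    (F G : ℝ → ℝ) (hF : ContDiff ℝ 2 F) (hG : ContDiff ℝ 2 G)
    (x y z : ℝ × ℝ → ℝ)
    (hxmy : ∀ p : ℝ × ℝ, x p - y p = F p.1 - ∫ t in (0:ℝ)..p.2, t ^ 2 * deriv G t)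
    (hxpy : ∀ p : ℝ × ℝ, x p + y p = G p.2 - ∫ t in (0:ℝ)..p.1, t ^ 2 * deriv F t)
    (hz : ∀ p : ℝ × ℝ, z p = (∫ t in (0:ℝ)..p.1, t * deriv F t) + ∫ t in (0:ℝ)..p.2, t * deriv G t) :
    ∀ q : ℝ × ℝ,
      let X : ℝ × ℝ → ℝ × ℝ × ℝ := fun p => (x p, y p, z p)
      let Xhat : ℝ × ℝ → ℝ × ℝ × ℝ := fun w => X (w.1 + w.2, w.1 - w.2)
      let r : ℝ := q.1 + q.2
      let s : ℝ := q.1 - q.2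
      innB (vdx Xhat q) (vdx Xhat q) = (1 + r * s) ^ 2 * deriv F r * deriv G s ∧
      innB (vdy Xhat q) (vdy Xhat q) = -((1 + r * s) ^ 2 * deriv F r * deriv G s) ∧
      innB (vdx Xhat q) (vdy Xhat q) = 0 := by
  intro q X Xhat r s
  -- continuity of derivatives
  have hF' : Continuous (deriv F) := hF.continuous_deriv one_le_two
  have hG' : Continuous (deriv G) := hG.continuous_deriv one_le_two
  have hFd : Differentiable ℝ F := hF.differentiable two_ne_zero
  have hGd : Differentiable ℝ G := hG.differentiable two_ne_zero
  -- FTC derivatives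
  have hg1 : ∀ u : ℝ, HasDerivAt (fun v => ∫ t in (0:ℝ)..v, t ^ 2 * deriv F t)
      (u ^ 2 * deriv F u) u := fun u =>
    (((continuous_pow 2).mul hF').integral_hasStrictDerivAt 0 u).hasDerivAt
  have hg2 : ∀ u : ℝ, HasDerivAt (fun v => ∫ t in (0:ℝ)..v, t ^ 2 * deriv G t)
      (u ^ 2 * deriv G u) u := fun u =>
    (((continuous_pow 2).mul hG').integral_hasStrictDerivAt 0 u).hasDerivAt
  have hh1 : ∀ u : ℝ, HasDerivAt (fun v => ∫ t in (0:ℝ)..v, t * deriv F t)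
      (u * deriv F u) u := fun u =>
    ((continuous_id.mul hF').integral_hasStrictDerivAt 0 u).hasDerivAt
  have hh2 : ∀ u : ℝ, HasDerivAt (fun v => ∫ t in (0:ℝ)..v, t * deriv G t)
      (u * deriv G u) u := fun u =>
    ((continuous_id.mul hG').integral_hasStrictDerivAt 0 u).hasDerivAt
  -- explicit formulas for x, y, z
  have hxeq : x = fun p : ℝ × ℝ =>
      ((F p.1 - ∫ t in (0:ℝ)..p.2, t ^ 2 * deriv G t)
        + (G p.2 - ∫ t in (0:ℝ)..p.1, t ^ 2 * deriv F t)) / 2 := by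
    funext p; rw [← hxmy p, ← hxpy p]; ring
  have hyeq : y = fun p : ℝ × ℝ =>
      ((G p.2 - ∫ t in (0:ℝ)..p.1, t ^ 2 * deriv F t)
        - (F p.1 - ∫ t in (0:ℝ)..p.2, t ^ 2 * deriv G t)) / 2 := by
    funext p; rw [← hxmy p, ← hxpy p]; ring
  set fst2 : ℝ × ℝ →L[ℝ] ℝ := ContinuousLinearMap.fst ℝ ℝ ℝ
  set snd2 : ℝ × ℝ →L[ℝ] ℝ := ContinuousLinearMap.snd ℝ ℝ ℝ
  -- derivatives of X at any point p
  have hXp : ∀ p : ℝ × ℝ, HasFDerivAt X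
      ((((2:ℝ)⁻¹ • ((deriv F p.1 • fst2 - (p.2 ^ 2 * deriv G p.2) • snd2)
          + (deriv G p.2 • snd2 - (p.1 ^ 2 * deriv F p.1) • fst2)))).prod
       ((((2:ℝ)⁻¹ • ((deriv G p.2 • snd2 - (p.1 ^ 2 * deriv F p.1) • fst2)
          - (deriv F p.1 • fst2 - (p.2 ^ 2 * deriv G p.2) • snd2)))).prod
        ((p.1 * deriv F p.1) • fst2 + (p.2 * deriv G p.2) • snd2))) p := by
    intro p
    have hA : HasFDerivAt (fun p : ℝ × ℝ => F p.1 - ∫ t in (0:ℝ)..p.2, t ^ 2 * deriv G t)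
        (deriv F p.1 • fst2 - (p.2 ^ 2 * deriv G p.2) • snd2) p :=
      (((hFd p.1).hasDerivAt.comp_hasFDerivAt p (hasFDerivAt_fst)).sub
        ((hg2 p.2).comp_hasFDerivAt p hasFDerivAt_snd))
    have hB : HasFDerivAt (fun p : ℝ × ℝ => G p.2 - ∫ t in (0:ℝ)..p.1, t ^ 2 * deriv F t)
        (deriv G p.2 • snd2 - (p.1 ^ 2 * deriv F p.1) • fst2) p :=
      (((hGd p.2).hasDerivAt.comp_hasFDerivAt p (hasFDerivAt_snd)).sub
        ((hg1 p.1).comp_hasFDerivAt p hasFDerivAt_fst))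
    have hxd : HasFDerivAt x ((2:ℝ)⁻¹ • ((deriv F p.1 • fst2 - (p.2 ^ 2 * deriv G p.2) • snd2)
        + (deriv G p.2 • snd2 - (p.1 ^ 2 * deriv F p.1) • fst2))) p := by
      rw [hxeq]
      simpa [smul_smul, div_eq_inv_mul, Pi.smul_def, Pi.add_def, Pi.sub_def, smul_eq_mul] using ((hA.add hB).const_smul (2:ℝ)⁻¹)
    have hyd : HasFDerivAt y ((2:ℝ)⁻¹ • ((deriv G p.2 • snd2 - (p.1 ^ 2 * deriv F p.1) • fst2)
        - (deriv F p.1 • fst2 - (p.2 ^ 2 * deriv G p.2) • snd2))) p := by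
      rw [hyeq]
      simpa [smul_smul, div_eq_inv_mul, Pi.smul_def, Pi.add_def, Pi.sub_def, smul_eq_mul] using ((hB.sub hA).const_smul (2:ℝ)⁻¹)
    have hzd : HasFDerivAt z ((p.1 * deriv F p.1) • fst2 + (p.2 * deriv G p.2) • snd2) p := by
      have : z = fun p : ℝ × ℝ =>
          (∫ t in (0:ℝ)..p.1, t * deriv F t) + ∫ t in (0:ℝ)..p.2, t * deriv G t :=
        funext hz
      rw [this]
      exact ((hh1 p.1).comp_hasFDerivAt p hasFDerivAt_fst).add
        ((hh2 p.2).comp_hasFDerivAt p hasFDerivAt_snd)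
    exact hxd.prodMk (hyd.prodMk hzd)
  -- the linear change of variables
  set L : ℝ × ℝ →L[ℝ] ℝ × ℝ := (fst2 + snd2).prod (fst2 - snd2)
  have hLfun : ∀ w : ℝ × ℝ, L w = (w.1 + w.2, w.1 - w.2) := fun w => rfl
  have hLq : HasFDerivAt (fun w : ℝ × ℝ => (w.1 + w.2, w.1 - w.2)) L q := by
    simpa [funext hLfun] using L.hasFDerivAt (x := q)
  have hXhat := (hXp (q.1 + q.2, q.1 - q.2)).comp q hLq
  set a := deriv F (q.1 + q.2) with ha
  set b := deriv G (q.1 - q.2) with hb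
  set u := q.1 + q.2 with hu
  set v := q.1 - q.2 with hv
  have e1 : vdx Xhat q =
      ((2:ℝ)⁻¹ * ((a - v ^ 2 * b) + (b - u ^ 2 * a)),
       (2:ℝ)⁻¹ * ((b - u ^ 2 * a) - (a - v ^ 2 * b)),
       u * a + v * b) := by
    rw [vdx, show Xhat = X ∘ (fun w : ℝ × ℝ => (w.1 + w.2, w.1 - w.2)) from rfl, hXhat.fderiv]
    simp [L, fst2, snd2]
    ring
  have e2 : vdy Xhat q =
      ((2:ℝ)⁻¹ * ((a + v ^ 2 * b) + (-b - u ^ 2 * a)),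
       (2:ℝ)⁻¹ * ((-b - u ^ 2 * a) - (a + v ^ 2 * b)),
       u * a - v * b) := by
    rw [vdy, show Xhat = X ∘ (fun w : ℝ × ℝ => (w.1 + w.2, w.1 - w.2)) from rfl, hXhat.fderiv]
    simp [L, fst2, snd2]
    ring_nf
    exact ⟨trivial, trivial⟩
  have hr : r = u := rfl
  have hs : s = v := rfl
  rw [hr, hs, e1, e2]
  refine ⟨?_, ?_, ?_⟩ <;> · simp only [innB, ← ha, ← hb]; ring
end
end

section
/- Let F, G : ℝ → ℝ be C², let X = (x,y,z) be the associated generalized Born–Infeld soliton surface, and define X̂(α,β) := X(α+β, α−β). If r₀, s₀ ∈ ℝ satisfy F′(r₀) = 0 or G′(s₀) = 0, then at the point (α₀,β₀) = ((r₀+s₀)/2, (r₀−s₀)/2) the vectors X̂_α(α₀,β₀) and X̂_β(α₀,β₀) are linearly dependent; i.e., (r₀,s₀) corresponds to a non-regular point of the surface. -/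
noncomputable section

/-- FTC for continuous integrands. -/
lemma ftc_cont {f : ℝ → ℝ} (hf : Continuous f) (a b : ℝ) :
    HasDerivAt (fun u => ∫ t in a..u, f t) (f b) b :=
  intervalIntegral.integral_hasDerivAt_right (hf.intervalIntegrable _ _)
    (hf.stronglyMeasurableAtFilter _ _) hf.continuousAt

/-- Fderiv of a split-variable sum. -/
lemma hasFDerivAt_split {f g : ℝ → ℝ} {a b : ℝ} (p : ℝ × ℝ)
    (hf : HasDerivAt f a p.1) (hg : HasDerivAt g b p.2) :
    HasFDerivAt (fun q : ℝ × ℝ => f q.1 + g q.2)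
      (a • ContinuousLinearMap.fst ℝ ℝ ℝ + b • ContinuousLinearMap.snd ℝ ℝ ℝ) p := by
  have h1 := hf.hasFDerivAt.comp p hasFDerivAt_fst
  have h2 := hg.hasFDerivAt.comp p hasFDerivAt_snd
  have h := h1.add h2
  exact h.congr_fderiv (by ext <;> simp [mul_comm])

/-- If `F′(r₀) = 0` or `G′(s₀) = 0`, then at the corresponding point
`(α₀,β₀) = ((r₀+s₀)/2, (r₀−s₀)/2)` the vectors `X̂_α` and `X̂_β` are linearly
dependent, i.e. `(r₀,s₀)` corresponds to a non-regular point of the surface. -/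
theorem generalized_bi_nonregular_point
    (F G : ℝ → ℝ) (hF : ContDiff ℝ 2 F) (hG : ContDiff ℝ 2 G)
    (x y z : ℝ × ℝ → ℝ)
    (hxmy : ∀ p : ℝ × ℝ, x p - y p = F p.1 - ∫ t in (0:ℝ)..p.2, t ^ 2 * deriv G t)
    (hxpy : ∀ p : ℝ × ℝ, x p + y p = G p.2 - ∫ t in (0:ℝ)..p.1, t ^ 2 * deriv F t)
    (hz : ∀ p : ℝ × ℝ, z p = (∫ t in (0:ℝ)..p.1, t * deriv F t) + ∫ t in (0:ℝ)..p.2, t * deriv G t)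
    (r₀ s₀ : ℝ) (hdeg : deriv F r₀ = 0 ∨ deriv G s₀ = 0) :
    let X : ℝ × ℝ → ℝ × ℝ × ℝ := fun p => (x p, y p, z p)
    let Xhat : ℝ × ℝ → ℝ × ℝ × ℝ := fun w => X (w.1 + w.2, w.1 - w.2)
    let q₀ : ℝ × ℝ := ((r₀ + s₀) / 2, (r₀ - s₀) / 2)
    ¬ LinearIndependent ℝ ![vdx Xhat q₀, vdy Xhat q₀] := by
  intro X Xhat q₀
  -- continuity of derivatives
  have cF : Continuous (deriv F) := hF.continuous_deriv one_le_two
  have cG : Continuous (deriv G) := hG.continuous_deriv one_le_two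
  -- explicit formulas for the components
  have hx : x = fun p : ℝ × ℝ =>
      (F p.1 - ∫ t in (0:ℝ)..p.1, t ^ 2 * deriv F t) / 2 +
      (G p.2 - ∫ t in (0:ℝ)..p.2, t ^ 2 * deriv G t) / 2 := by
    funext p; have h1 := hxmy p; have h2 := hxpy p; linarith
  have hy : y = fun p : ℝ × ℝ =>
      (-F p.1 - ∫ t in (0:ℝ)..p.1, t ^ 2 * deriv F t) / 2 +
      (G p.2 + ∫ t in (0:ℝ)..p.2, t ^ 2 * deriv G t) / 2 := by
    funext p; have h1 := hxmy p; have h2 := hxpy p; linarith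
  have hz' : z = fun p : ℝ × ℝ =>
      (∫ t in (0:ℝ)..p.1, t * deriv F t) + ∫ t in (0:ℝ)..p.2, t * deriv G t := by
    funext p; exact hz p
  -- one-variable derivatives
  have hFd : HasDerivAt F (deriv F r₀) r₀ :=
    ((hF.differentiable (by norm_num)) r₀).hasDerivAt
  have hGd : HasDerivAt G (deriv G s₀) s₀ :=
    ((hG.differentiable (by norm_num)) s₀).hasDerivAt
  have hIF : HasDerivAt (fun u => ∫ t in (0:ℝ)..u, t ^ 2 * deriv F t)
      (r₀ ^ 2 * deriv F r₀) r₀ := ftc_cont (by fun_prop) 0 r₀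
  have hIG : HasDerivAt (fun u => ∫ t in (0:ℝ)..u, t ^ 2 * deriv G t)
      (s₀ ^ 2 * deriv G s₀) s₀ := ftc_cont (by fun_prop) 0 s₀
  have hJF : HasDerivAt (fun u => ∫ t in (0:ℝ)..u, t * deriv F t)
      (r₀ * deriv F r₀) r₀ := ftc_cont (by fun_prop) 0 r₀
  have hJG : HasDerivAt (fun u => ∫ t in (0:ℝ)..u, t * deriv G t)
      (s₀ * deriv G s₀) s₀ := ftc_cont (by fun_prop) 0 s₀
  set a1 : ℝ := (deriv F r₀ - r₀ ^ 2 * deriv F r₀) / 2 with ha1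
  set b1 : ℝ := (deriv G s₀ - s₀ ^ 2 * deriv G s₀) / 2 with hb1
  set a2 : ℝ := (-deriv F r₀ - r₀ ^ 2 * deriv F r₀) / 2 with ha2
  set b2 : ℝ := (deriv G s₀ + s₀ ^ 2 * deriv G s₀) / 2 with hb2
  set a3 : ℝ := r₀ * deriv F r₀ with ha3
  set b3 : ℝ := s₀ * deriv G s₀ with hb3
  have hx' : HasFDerivAt x
      (a1 • ContinuousLinearMap.fst ℝ ℝ ℝ + b1 • ContinuousLinearMap.snd ℝ ℝ ℝ)
      (r₀, s₀) := by
    rw [hx]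
    exact hasFDerivAt_split (r₀, s₀) ((hFd.sub hIF).div_const 2) ((hGd.sub hIG).div_const 2)
  have hy' : HasFDerivAt y
      (a2 • ContinuousLinearMap.fst ℝ ℝ ℝ + b2 • ContinuousLinearMap.snd ℝ ℝ ℝ)
      (r₀, s₀) := by
    rw [hy]
    exact hasFDerivAt_split (r₀, s₀) ((hFd.neg.sub hIF).div_const 2) ((hGd.add hIG).div_const 2)
  have hz'' : HasFDerivAt z
      (a3 • ContinuousLinearMap.fst ℝ ℝ ℝ + b3 • ContinuousLinearMap.snd ℝ ℝ ℝ)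
      (r₀, s₀) := by
    rw [hz']
    have h := hasFDerivAt_split (f := fun u => ∫ t in (0:ℝ)..u, t * deriv F t)
      (g := fun u => ∫ t in (0:ℝ)..u, t * deriv G t) (r₀, s₀) hJF hJG
    exact h
  -- the full derivative of X at (r₀, s₀)
  set D : (ℝ × ℝ) →L[ℝ] ℝ × ℝ × ℝ :=
    (a1 • ContinuousLinearMap.fst ℝ ℝ ℝ + b1 • ContinuousLinearMap.snd ℝ ℝ ℝ).prod
      ((a2 • ContinuousLinearMap.fst ℝ ℝ ℝ + b2 • ContinuousLinearMap.snd ℝ ℝ ℝ).prod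
       (a3 • ContinuousLinearMap.fst ℝ ℝ ℝ + b3 • ContinuousLinearMap.snd ℝ ℝ ℝ)) with hD
  have hX : HasFDerivAt X D (r₀, s₀) := HasFDerivAt.prodMk hx' (HasFDerivAt.prodMk hy' hz'')
  -- the linear change of variables
  set L : (ℝ × ℝ) →L[ℝ] ℝ × ℝ :=
    (ContinuousLinearMap.fst ℝ ℝ ℝ + ContinuousLinearMap.snd ℝ ℝ ℝ).prod
      (ContinuousLinearMap.fst ℝ ℝ ℝ - ContinuousLinearMap.snd ℝ ℝ ℝ) with hL
  have hLq : L q₀ = (r₀, s₀) := by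
    simp only [hL, ContinuousLinearMap.prod_apply, ContinuousLinearMap.add_apply,
      ContinuousLinearMap.sub_apply, ContinuousLinearMap.coe_fst', ContinuousLinearMap.coe_snd']
    show ((r₀ + s₀) / 2 + (r₀ - s₀) / 2, (r₀ + s₀) / 2 - (r₀ - s₀) / 2) = (r₀, s₀)
    norm_num; constructor <;> ring
  have hXhat : HasFDerivAt Xhat (D.comp L) q₀ := by
    have hXL : HasFDerivAt X D (L q₀) := hLq ▸ hX
    have := hXL.comp q₀ L.hasFDerivAt
    exact this
  have hL10 : L (1, 0) = ((1 : ℝ), (1 : ℝ)) := by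
    simp [hL]
  have hL01 : L (0, 1) = ((1 : ℝ), (-1 : ℝ)) := by
    simp [hL]
  have hvdx : vdx Xhat q₀ = D (1, 1) := by
    rw [vdx, hXhat.fderiv, ContinuousLinearMap.comp_apply, hL10]
  have hvdy : vdy Xhat q₀ = D (1, -1) := by
    rw [vdy, hXhat.fderiv, ContinuousLinearMap.comp_apply, hL01]
  have hD1 : D ((1 : ℝ), (1 : ℝ)) = (a1 + b1, a2 + b2, a3 + b3) := by
    simp only [hD, ContinuousLinearMap.prod_apply, ContinuousLinearMap.add_apply,
      ContinuousLinearMap.smul_apply, ContinuousLinearMap.coe_fst',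
      ContinuousLinearMap.coe_snd', smul_eq_mul]
    norm_num
  have hD2 : D ((1 : ℝ), (-1 : ℝ)) = (a1 - b1, a2 - b2, a3 - b3) := by
    simp only [hD, ContinuousLinearMap.prod_apply, ContinuousLinearMap.add_apply,
      ContinuousLinearMap.smul_apply, ContinuousLinearMap.coe_fst',
      ContinuousLinearMap.coe_snd', smul_eq_mul]
    refine Prod.ext (by ring) (Prod.ext (by ring) (by ring))
  intro hli
  rw [LinearIndependent.pair_iff] at hli
  rcases hdeg with h0 | h0
  · -- a_i = 0, so vdx = -vdy : use coefficients (1, 1)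
    have hA1 : a1 = 0 := by rw [ha1, h0]; ring
    have hA2 : a2 = 0 := by rw [ha2, h0]; ring
    have hA3 : a3 = 0 := by rw [ha3, h0]; ring
    have := hli 1 1 (by
      rw [hvdx, hvdy, hD1, hD2, hA1, hA2, hA3, one_smul, one_smul]
      refine Prod.ext (by simp) (Prod.ext (by simp) (by simp)))
    exact one_ne_zero this.1
  · -- b_i = 0, so vdx = vdy : use coefficients (1, -1)
    have hB1 : b1 = 0 := by rw [hb1, h0]; ring
    have hB2 : b2 = 0 := by rw [hb2, h0]; ring
    have hB3 : b3 = 0 := by rw [hb3, h0]; ring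
    have := hli 1 (-1) (by
      rw [hvdx, hvdy, hD1, hD2, hB1, hB2, hB3, one_smul, neg_one_smul]
      refine Prod.ext (by simp) (Prod.ext (by simp) (by simp)))
    exact one_ne_zero this.1
end
end

section
/- Let F, G : ℝ → ℝ be C² and let X = (x,y,z) be the associated generalized Born–Infeld soliton surface. If (r,s) ∈ ℝ² satisfies |rs| < 1 and F′(r)G′(s) ≠ 0, then the unit normal N := (X_r ×_B X_s)/√|⟨X_r ×_B X_s, X_r ×_B X_s⟩_B| at (r,s) equals −sgn(F′(r)G′(s)) · Ñ(r,s); in particular N = ±Ñ(r,s) and is independent of F and G up to sign. -/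
noncomputable section

/-- The cross product of `B³`, satisfying `⟨u ×_B v, w⟩_B = det [u v w]`. -/
def crossB (u v : ℝ × ℝ × ℝ) : ℝ × ℝ × ℝ :=
  (u.2.1 * v.2.2 - u.2.2 * v.2.1, u.1 * v.2.2 - u.2.2 * v.1, u.1 * v.2.1 - u.2.1 * v.1)

/-- The candidate unit normal `Ñ(r,s) = ((r+s)/(1+rs), (r−s)/(1+rs), (rs−1)/(1+rs))`. -/
def Ntilde (r s : ℝ) : ℝ × ℝ × ℝ :=
  ((r + s) / (1 + r * s), (r - s) / (1 + r * s), (r * s - 1) / (1 + r * s))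

/-- The unit normal of a generalized Born–Infeld soliton surface at a regular
parameter point `(r,s)` with `|rs| < 1` is `−sgn(F′(r)G′(s))·Ñ(r,s)`; in
particular it is `±Ñ(r,s)` and does not depend on `F` and `G` up to sign. -/
theorem generalized_bi_unit_normal
    (F G : ℝ → ℝ) (hF : ContDiff ℝ 2 F) (hG : ContDiff ℝ 2 G)
    (x y z : ℝ × ℝ → ℝ)
    (hxmy : ∀ p : ℝ × ℝ, x p - y p = F p.1 - ∫ t in (0:ℝ)..p.2, t ^ 2 * deriv G t)
    (hxpy : ∀ p : ℝ × ℝ, x p + y p = G p.2 - ∫ t in (0:ℝ)..p.1, t ^ 2 * deriv F t)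
    (hz : ∀ p : ℝ × ℝ, z p = (∫ t in (0:ℝ)..p.1, t * deriv F t) + ∫ t in (0:ℝ)..p.2, t * deriv G t)
    (p : ℝ × ℝ) (hrs : |p.1 * p.2| < 1) (hFG : deriv F p.1 * deriv G p.2 ≠ 0) :
    let X : ℝ × ℝ → ℝ × ℝ × ℝ := fun q => (x q, y q, z q)
    let c : ℝ × ℝ × ℝ := crossB (vdx X p) (vdy X p)
    let N : ℝ × ℝ × ℝ := (Real.sqrt |innB c c|)⁻¹ • c
    N = (-Real.sign (deriv F p.1 * deriv G p.2)) • Ntilde p.1 p.2 := by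
  intro X c N
  obtain ⟨r, s⟩ := p
  simp only at hrs hFG ⊢
  set a := deriv F r with ha
  set b := deriv G s with hb
  -- continuity of derivatives
  have hFc : Continuous (deriv F) := hF.continuous_deriv one_le_two
  have hGc : Continuous (deriv G) := hG.continuous_deriv one_le_two
  have hFd : Differentiable ℝ F := hF.differentiable two_ne_zero
  have hGd : Differentiable ℝ G := hG.differentiable two_ne_zero
  -- derivative facts for the integrals
  have hIF : HasDerivAt (fun u : ℝ => ∫ t in (0:ℝ)..u, t ^ 2 * deriv F t) (r ^ 2 * a) r :=
    (((continuous_pow 2).mul hFc).integral_hasStrictDerivAt 0 r).hasDerivAt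
  have hIG : HasDerivAt (fun u : ℝ => ∫ t in (0:ℝ)..u, t ^ 2 * deriv G t) (s ^ 2 * b) s :=
    (((continuous_pow 2).mul hGc).integral_hasStrictDerivAt 0 s).hasDerivAt
  have hJF : HasDerivAt (fun u : ℝ => ∫ t in (0:ℝ)..u, t * deriv F t) (r * a) r :=
    ((continuous_id.mul hFc).integral_hasStrictDerivAt 0 r).hasDerivAt
  have hJG : HasDerivAt (fun u : ℝ => ∫ t in (0:ℝ)..u, t * deriv G t) (s * b) s :=
    ((continuous_id.mul hGc).integral_hasStrictDerivAt 0 s).hasDerivAt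
  have hFr : HasDerivAt F a r := hFd.differentiableAt.hasDerivAt
  have hGs : HasDerivAt G b s := hGd.differentiableAt.hasDerivAt
  -- fderivs of compositions with projections
  have hfst : HasFDerivAt (fun q : ℝ × ℝ => q.1) (ContinuousLinearMap.fst ℝ ℝ ℝ) (r, s) :=
    hasFDerivAt_fst
  have hsnd : HasFDerivAt (fun q : ℝ × ℝ => q.2) (ContinuousLinearMap.snd ℝ ℝ ℝ) (r, s) :=
    hasFDerivAt_snd
  have hF1 := hFr.comp_hasFDerivAt (r, s) hfst
  have hG1 := hGs.comp_hasFDerivAt (r, s) hsnd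
  have hIF1 := hIF.comp_hasFDerivAt (r, s) hfst
  have hIG1 := hIG.comp_hasFDerivAt (r, s) hsnd
  have hJF1 := hJF.comp_hasFDerivAt (r, s) hfst
  have hJG1 := hJG.comp_hasFDerivAt (r, s) hsnd
  -- explicit formulas for x, y, z
  have hxe : x = fun q : ℝ × ℝ =>
      (2:ℝ)⁻¹ • ((G q.2 - ∫ t in (0:ℝ)..q.1, t ^ 2 * deriv F t) +
       (F q.1 - ∫ t in (0:ℝ)..q.2, t ^ 2 * deriv G t)) := by
    funext q; have h1 := hxmy q; have h2 := hxpy q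
    simp only [smul_eq_mul]; linarith
  have hye : y = fun q : ℝ × ℝ =>
      (2:ℝ)⁻¹ • ((G q.2 - ∫ t in (0:ℝ)..q.1, t ^ 2 * deriv F t) -
       (F q.1 - ∫ t in (0:ℝ)..q.2, t ^ 2 * deriv G t)) := by
    funext q; have h1 := hxmy q; have h2 := hxpy q
    simp only [smul_eq_mul]; linarith
  have hze : z = fun q : ℝ × ℝ =>
      (∫ t in (0:ℝ)..q.1, t * deriv F t) + ∫ t in (0:ℝ)..q.2, t * deriv G t := by
    funext q; exact hz q
  have hx : HasFDerivAt x ((2:ℝ)⁻¹ • ((b • ContinuousLinearMap.snd ℝ ℝ ℝ -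
      (r ^ 2 * a) • ContinuousLinearMap.fst ℝ ℝ ℝ) +
      (a • ContinuousLinearMap.fst ℝ ℝ ℝ -
      (s ^ 2 * b) • ContinuousLinearMap.snd ℝ ℝ ℝ))) (r, s) := by
    rw [hxe]
    exact ((hG1.sub hIF1).add (hF1.sub hIG1)).const_smul (2:ℝ)⁻¹
  have hy : HasFDerivAt y ((2:ℝ)⁻¹ • ((b • ContinuousLinearMap.snd ℝ ℝ ℝ -
      (r ^ 2 * a) • ContinuousLinearMap.fst ℝ ℝ ℝ) -
      (a • ContinuousLinearMap.fst ℝ ℝ ℝ -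
      (s ^ 2 * b) • ContinuousLinearMap.snd ℝ ℝ ℝ))) (r, s) := by
    rw [hye]
    exact ((hG1.sub hIF1).sub (hF1.sub hIG1)).const_smul (2:ℝ)⁻¹
  have hzf : HasFDerivAt z ((r * a) • ContinuousLinearMap.fst ℝ ℝ ℝ +
      (s * b) • ContinuousLinearMap.snd ℝ ℝ ℝ) (r, s) := by
    rw [hze]
    exact hJF1.add hJG1
  have hX : HasFDerivAt X (ContinuousLinearMap.prod ((2:ℝ)⁻¹ • ((b • ContinuousLinearMap.snd ℝ ℝ ℝ -
      (r ^ 2 * a) • ContinuousLinearMap.fst ℝ ℝ ℝ) +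
      (a • ContinuousLinearMap.fst ℝ ℝ ℝ -
      (s ^ 2 * b) • ContinuousLinearMap.snd ℝ ℝ ℝ)))
      (ContinuousLinearMap.prod ((2:ℝ)⁻¹ • ((b • ContinuousLinearMap.snd ℝ ℝ ℝ -
      (r ^ 2 * a) • ContinuousLinearMap.fst ℝ ℝ ℝ) -
      (a • ContinuousLinearMap.fst ℝ ℝ ℝ -
      (s ^ 2 * b) • ContinuousLinearMap.snd ℝ ℝ ℝ)))
      ((r * a) • ContinuousLinearMap.fst ℝ ℝ ℝ +
      (s * b) • ContinuousLinearMap.snd ℝ ℝ ℝ))) (r, s) :=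
    HasFDerivAt.prodMk hx (HasFDerivAt.prodMk hy hzf)
  have hvdx : vdx X (r, s) = (a * (1 - r ^ 2) / 2, -(a * (1 + r ^ 2) / 2), r * a) := by
    rw [vdx, hX.fderiv]
    simp [ContinuousLinearMap.prod_apply, ContinuousLinearMap.smul_apply,
      ContinuousLinearMap.add_apply, ContinuousLinearMap.sub_apply,
      ContinuousLinearMap.coe_fst', ContinuousLinearMap.coe_snd', Prod.ext_iff,
      smul_eq_mul]
    constructor <;> ring
  have hvdy : vdy X (r, s) = (b * (1 - s ^ 2) / 2, b * (1 + s ^ 2) / 2, s * b) := by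
    rw [vdy, hX.fderiv]
    simp [ContinuousLinearMap.prod_apply, ContinuousLinearMap.smul_apply,
      ContinuousLinearMap.add_apply, ContinuousLinearMap.sub_apply,
      ContinuousLinearMap.coe_fst', ContinuousLinearMap.coe_snd', Prod.ext_iff,
      smul_eq_mul]
    constructor <;> ring
  -- the cross product
  have h1rs : (0:ℝ) < 1 + r * s := by
    have := abs_lt.mp hrs; linarith [this.1]
  set k : ℝ := a * b * (1 + r * s) ^ 2 / 2 with hk
  have hc : c = (-k) • Ntilde r s := by
    show crossB (vdx X (r, s)) (vdy X (r, s)) = _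
    rw [hvdx, hvdy]
    simp only [crossB, Ntilde, Prod.smul_def, smul_eq_mul, Prod.mk.injEq, hk]
    refine ⟨?_, ?_, ?_⟩ <;> field_simp <;> ring
  have hNt : innB (Ntilde r s) (Ntilde r s) = 1 := by
    simp only [innB, Ntilde]
    field_simp
    ring
  have hsmul : ∀ (t : ℝ) (v : ℝ × ℝ × ℝ), innB (t • v) (t • v) = t ^ 2 * innB v v := by
    intro t v
    simp only [innB, Prod.smul_def, smul_eq_mul]
    ring
  have hinn : innB c c = k ^ 2 := by
    rw [hc, hsmul, hNt]
    ring
  have hk0 : k ≠ 0 := by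
    apply div_ne_zero
    · exact mul_ne_zero hFG (pow_ne_zero 2 h1rs.ne')
    · norm_num
  have hsq : Real.sqrt |innB c c| = |k| := by
    rw [hinn, abs_of_nonneg (sq_nonneg k), Real.sqrt_sq_eq_abs]
  show (Real.sqrt |innB c c|)⁻¹ • c = _
  rw [hsq, hc, smul_smul]
  congr 1
  have hpos : (0:ℝ) < (1 + r * s) ^ 2 / 2 := by positivity
  rcases hFG.lt_or_gt with h | h
  · have hkneg : k < 0 := by
      rw [hk]
      calc a * b * (1 + r * s) ^ 2 / 2 = (a * b) * ((1 + r * s) ^ 2 / 2) := by ring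
      _ < 0 := mul_neg_of_neg_of_pos h hpos
    rw [Real.sign_of_neg h, abs_of_neg hkneg]
    field_simp
  · have hkpos : 0 < k := by
      rw [hk]
      calc (0:ℝ) < (a * b) * ((1 + r * s) ^ 2 / 2) := mul_pos h hpos
      _ = a * b * (1 + r * s) ^ 2 / 2 := by ring
    rw [Real.sign_of_pos h, abs_of_pos hkpos]
    field_simp
end
end

section
/- Let F, G : ℝ → ℝ be C², let X = (x,y,z) be the associated generalized Born–Infeld soliton surface, and let (r₀,s₀) ∈ ℝ² satisfy |r₀s₀| < 1 and F′(r₀)G′(s₀) ≠ 0. Suppose there exist an open neighborhood Ω of (r₀,s₀), an open set U ⊆ ℝ², and a C² function φ : U → ℝ such that (x(r,s), y(r,s)) ∈ U and z(r,s) = φ(x(r,s), y(r,s)) for all (r,s) ∈ Ω (i.e., the surface is a graph over the xy-plane near (r₀,s₀)). Then at the point p := (x(r₀,s₀), y(r₀,s₀)) one has 1 + φ_x(p)² − φ_y(p)² > 0 and (1 − φ_y²)φ_xx + 2φ_xφ_yφ_xy − (1 + φ_x²)φ_yy = 0 at p; i.e., φ is a BI soliton near p. -/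
noncomputable section

set_option maxHeartbeats 2000000 in
open ContinuousLinearMap in
/-- If a generalized Born–Infeld soliton surface is a graph `z = φ(x,y)` near a
parameter point `(r₀,s₀)` with `|r₀s₀| < 1` and `F′(r₀)G′(s₀) ≠ 0`, then at the
corresponding point `p` of the plane, `φ` satisfies the hyperbolicity condition
`1 + φ_x² − φ_y² > 0` and the Born–Infeld equation; i.e., `φ` is a BI soliton near `p`. -/
theorem generalized_bi_graph_is_bi_soliton
    (F G : ℝ → ℝ) (hF : ContDiff ℝ 2 F) (hG : ContDiff ℝ 2 G)
    (x y z : ℝ × ℝ → ℝ)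
    (hxmy : ∀ p : ℝ × ℝ, x p - y p = F p.1 - ∫ t in (0:ℝ)..p.2, t ^ 2 * deriv G t)
    (hxpy : ∀ p : ℝ × ℝ, x p + y p = G p.2 - ∫ t in (0:ℝ)..p.1, t ^ 2 * deriv F t)
    (hz : ∀ p : ℝ × ℝ, z p = (∫ t in (0:ℝ)..p.1, t * deriv F t) + ∫ t in (0:ℝ)..p.2, t * deriv G t)
    (r₀ s₀ : ℝ) (hrs : |r₀ * s₀| < 1) (hFG : deriv F r₀ * deriv G s₀ ≠ 0)
    (Ω : Set (ℝ × ℝ)) (hΩ : IsOpen Ω) (hmem : (r₀, s₀) ∈ Ω)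
    (U : Set (ℝ × ℝ)) (hU : IsOpen U)
    (φ : ℝ × ℝ → ℝ) (hφ : ContDiffOn ℝ 2 φ U)
    (hgraph : ∀ p ∈ Ω, (x p, y p) ∈ U ∧ z p = φ (x p, y p)) :
    let q : ℝ × ℝ := (x (r₀, s₀), y (r₀, s₀))
    0 < 1 + (pdx φ q) ^ 2 - (pdy φ q) ^ 2 ∧
    (1 - (pdy φ q) ^ 2) * pdx (pdx φ) q + 2 * pdx φ q * pdy φ q * pdx (pdy φ) q
      - (1 + (pdx φ q) ^ 2) * pdy (pdy φ) q = 0 := by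
  intro q
  have ha : deriv F r₀ ≠ 0 := fun h => hFG (by rw [h]; ring)
  have hb : deriv G s₀ ≠ 0 := fun h => hFG (by rw [h]; ring)
  have hFc : Continuous (deriv F) := hF.continuous_deriv one_le_two
  have hGc : Continuous (deriv G) := hG.continuous_deriv one_le_two
  have hcF2 : Continuous fun t : ℝ => t ^ 2 * deriv F t := (continuous_pow 2).mul hFc
  have hcG2 : Continuous fun t : ℝ => t ^ 2 * deriv G t := (continuous_pow 2).mul hGc
  have hcF1 : Continuous fun t : ℝ => t * deriv F t := continuous_id.mul hFc
  have hcG1 : Continuous fun t : ℝ => t * deriv G t := continuous_id.mul hGc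
  -- explicit formulas for x, y, z
  have hxx : x = fun p : ℝ × ℝ => (F p.1 - (∫ t in (0:ℝ)..p.2, t ^ 2 * deriv G t)
      + (G p.2 - ∫ t in (0:ℝ)..p.1, t ^ 2 * deriv F t)) * (1/2) := by
    funext p; have h1 := hxmy p; have h2 := hxpy p; linarith
  have hyy : y = fun p : ℝ × ℝ => ((G p.2 - ∫ t in (0:ℝ)..p.1, t ^ 2 * deriv F t)
      - (F p.1 - ∫ t in (0:ℝ)..p.2, t ^ 2 * deriv G t)) * (1/2) := by
    funext p; have h1 := hxmy p; have h2 := hxpy p; linarith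
  have hzz : z = fun p : ℝ × ℝ => (∫ t in (0:ℝ)..p.1, t * deriv F t)
      + ∫ t in (0:ℝ)..p.2, t * deriv G t := funext hz
  -- first derivatives of x, y, z
  have hFd : ∀ p : ℝ × ℝ, HasFDerivAt (fun q : ℝ × ℝ => F q.1) ((deriv F p.1) • fst ℝ ℝ ℝ) p :=
    fun p => (((hF.differentiable two_ne_zero) p.1).hasDerivAt).comp_hasFDerivAt p hasFDerivAt_fst
  have hGd : ∀ p : ℝ × ℝ, HasFDerivAt (fun q : ℝ × ℝ => G q.2) ((deriv G p.2) • snd ℝ ℝ ℝ) p :=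
    fun p => (((hG.differentiable two_ne_zero) p.2).hasDerivAt).comp_hasFDerivAt p hasFDerivAt_snd
  have hIF : ∀ p : ℝ × ℝ, HasFDerivAt (fun q : ℝ × ℝ => ∫ t in (0:ℝ)..q.1, t ^ 2 * deriv F t)
      ((p.1 ^ 2 * deriv F p.1) • fst ℝ ℝ ℝ) p :=
    fun p => ((hcF2.integral_hasStrictDerivAt 0 p.1).hasDerivAt).comp_hasFDerivAt p hasFDerivAt_fst
  have hIG : ∀ p : ℝ × ℝ, HasFDerivAt (fun q : ℝ × ℝ => ∫ t in (0:ℝ)..q.2, t ^ 2 * deriv G t)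
      ((p.2 ^ 2 * deriv G p.2) • snd ℝ ℝ ℝ) p :=
    fun p => ((hcG2.integral_hasStrictDerivAt 0 p.2).hasDerivAt).comp_hasFDerivAt p hasFDerivAt_snd
  have hJF : ∀ p : ℝ × ℝ, HasFDerivAt (fun q : ℝ × ℝ => ∫ t in (0:ℝ)..q.1, t * deriv F t)
      ((p.1 * deriv F p.1) • fst ℝ ℝ ℝ) p :=
    fun p => ((hcF1.integral_hasStrictDerivAt 0 p.1).hasDerivAt).comp_hasFDerivAt p hasFDerivAt_fst
  have hJG : ∀ p : ℝ × ℝ, HasFDerivAt (fun q : ℝ × ℝ => ∫ t in (0:ℝ)..q.2, t * deriv G t)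
      ((p.2 * deriv G p.2) • snd ℝ ℝ ℝ) p :=
    fun p => ((hcG1.integral_hasStrictDerivAt 0 p.2).hasDerivAt).comp_hasFDerivAt p hasFDerivAt_snd
  have hxd : ∀ p : ℝ × ℝ, HasFDerivAt x
      ((deriv F p.1 * (1 - p.1 ^ 2) / 2) • fst ℝ ℝ ℝ + (deriv G p.2 * (1 - p.2 ^ 2) / 2) • snd ℝ ℝ ℝ) p := by
    intro p
    rw [hxx]
    have := (((hFd p).sub (hIG p)).add ((hGd p).sub (hIF p))).mul_const (1/2 : ℝ)
    refine this.congr_fderiv ?_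
    ext
    · simp; ring
    · simp; ring
  have hyd : ∀ p : ℝ × ℝ, HasFDerivAt y
      ((-(deriv F p.1 * (1 + p.1 ^ 2)) / 2) • fst ℝ ℝ ℝ + (deriv G p.2 * (1 + p.2 ^ 2) / 2) • snd ℝ ℝ ℝ) p := by
    intro p
    rw [hyy]
    have := (((hGd p).sub (hIF p)).sub ((hFd p).sub (hIG p))).mul_const (1/2 : ℝ)
    refine this.congr_fderiv ?_
    ext
    · simp; ring
    · simp; ring
  have hzd : ∀ p : ℝ × ℝ, HasFDerivAt z
      ((p.1 * deriv F p.1) • fst ℝ ℝ ℝ + (p.2 * deriv G p.2) • snd ℝ ℝ ℝ) p := by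
    intro p
    rw [hzz]
    exact (hJF p).add (hJG p)
  set X : ℝ × ℝ → ℝ × ℝ := fun p => (x p, y p) with hXdef
  have hXd : ∀ p : ℝ × ℝ, HasFDerivAt X
      (((deriv F p.1 * (1 - p.1 ^ 2) / 2) • fst ℝ ℝ ℝ + (deriv G p.2 * (1 - p.2 ^ 2) / 2) • snd ℝ ℝ ℝ).prod
       ((-(deriv F p.1 * (1 + p.1 ^ 2)) / 2) • fst ℝ ℝ ℝ + (deriv G p.2 * (1 + p.2 ^ 2) / 2) • snd ℝ ℝ ℝ)) p :=
    fun p => (hxd p).prodMk (hyd p)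
  -- decomposition helpers
  have hdec : ∀ (L : ℝ × ℝ →L[ℝ] ℝ) (c d : ℝ), L (c, d) = c * L (1, 0) + d * L (0, 1) := by
    intro L c d
    have h : (c, d) = c • ((1:ℝ), (0:ℝ)) + d • ((0:ℝ), (1:ℝ)) := by
      simp [Prod.ext_iff]
    rw [h, map_add, map_smul, map_smul]; simp
  have hdec2 : ∀ (L : ℝ × ℝ →L[ℝ] ((ℝ × ℝ) →L[ℝ] ℝ)) (c d : ℝ) (w : ℝ × ℝ),
      (L (c, d)) w = c * (L (1, 0)) w + d * (L (0, 1)) w := by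
    intro L c d w
    have h : (c, d) = c • ((1:ℝ), (0:ℝ)) + d • ((0:ℝ), (1:ℝ)) := by
      simp [Prod.ext_iff]
    rw [h, map_add, map_smul, map_smul]; simp
  -- the good neighborhood
  set N : Set (ℝ × ℝ) := Ω ∩ ((fun p : ℝ × ℝ => deriv F p.1) ⁻¹' {0}ᶜ ∩
      ((fun p : ℝ × ℝ => deriv G p.2) ⁻¹' {0}ᶜ ∩ (fun p : ℝ × ℝ => |p.1 * p.2|) ⁻¹' Set.Iio 1)) with hNdef
  have hNopen : IsOpen N := by
    apply hΩ.inter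
    apply IsOpen.inter
    · exact isOpen_compl_singleton.preimage (hFc.comp continuous_fst)
    apply IsOpen.inter
    · exact isOpen_compl_singleton.preimage (hGc.comp continuous_snd)
    · exact isOpen_Iio.preimage ((continuous_fst.mul continuous_snd).abs)
  have hNmem : (r₀, s₀) ∈ N := ⟨hmem, ha, hb, hrs⟩
  -- first-order relations on N
  have eqUV : ∀ p ∈ N, (1 - p.1 * p.2) * pdx φ (X p) = p.1 + p.2 ∧
      (1 - p.1 * p.2) * pdy φ (X p) = p.2 - p.1 := by
    intro p hp
    obtain ⟨hpΩ, ha', hb', habs⟩ := hp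
    replace ha' : deriv F p.1 ≠ 0 := ha'
    replace hb' : deriv G p.2 ≠ 0 := hb'
    replace habs : |p.1 * p.2| < 1 := habs
    have habs' := abs_lt.mp habs
    have h1p : 1 + p.1 * p.2 ≠ 0 := by intro h; linarith [habs'.1]
    have hXU : X p ∈ U := (hgraph p hpΩ).1
    have hφd : DifferentiableAt ℝ φ (X p) :=
      (hφ.contDiffAt (hU.mem_nhds hXU)).differentiableAt two_ne_zero
    have hcomp : HasFDerivAt (fun p' => φ (X p')) ((fderiv ℝ φ (X p)).comp
        (((deriv F p.1 * (1 - p.1 ^ 2) / 2) • fst ℝ ℝ ℝ + (deriv G p.2 * (1 - p.2 ^ 2) / 2) • snd ℝ ℝ ℝ).prod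
         ((-(deriv F p.1 * (1 + p.1 ^ 2)) / 2) • fst ℝ ℝ ℝ + (deriv G p.2 * (1 + p.2 ^ 2) / 2) • snd ℝ ℝ ℝ))) p :=
      (hφd.hasFDerivAt).comp p (hXd p)
    have hzeq : z =ᶠ[nhds p] fun p' => φ (X p') :=
      Filter.eventuallyEq_of_mem (hΩ.mem_nhds hpΩ) fun q' hq' => (hgraph q' hq').2
    have hz2 := hcomp.congr_of_eventuallyEq hzeq
    have hLeq := hz2.unique (hzd p)
    have raw1 := DFunLike.congr_fun hLeq ((1:ℝ), (0:ℝ))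
    have raw2 := DFunLike.congr_fun hLeq ((0:ℝ), (1:ℝ))
    simp only [ContinuousLinearMap.comp_apply, ContinuousLinearMap.prod_apply,
      ContinuousLinearMap.add_apply, ContinuousLinearMap.coe_smul', Pi.smul_apply,
      ContinuousLinearMap.coe_fst', ContinuousLinearMap.coe_snd', smul_eq_mul,
      mul_one, mul_zero, add_zero, zero_add] at raw1 raw2
    rw [hdec] at raw1 raw2
    simp only [pdx, pdy]
    set u' := fderiv ℝ φ (X p) (1, 0) with hu'
    set v' := fderiv ℝ φ (X p) (0, 1) with hv'
    have hm : deriv F p.1 * (deriv G p.2 * (1 + p.1 * p.2)) ≠ 0 :=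
      mul_ne_zero ha' (mul_ne_zero hb' h1p)
    constructor
    · have key : (deriv F p.1 * (deriv G p.2 * (1 + p.1 * p.2))) *
          ((1 - p.1 * p.2) * u' - (p.1 + p.2)) = 0 := by
        linear_combination (deriv G p.2 * (1 + p.2 ^ 2)) * raw1 + (deriv F p.1 * (1 + p.1 ^ 2)) * raw2
      have := (mul_eq_zero.mp key).resolve_left hm
      linarith
    · have key : (deriv F p.1 * (deriv G p.2 * (1 + p.1 * p.2))) *
          ((1 - p.1 * p.2) * v' - (p.2 - p.1)) = 0 := by
        linear_combination (-(deriv G p.2 * (1 - p.2 ^ 2))) * raw1 + (deriv F p.1 * (1 - p.1 ^ 2)) * raw2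
      have := (mul_eq_zero.mp key).resolve_left hm
      linarith
  -- second-order analysis at (r₀, s₀)
  have hqX : q = X (r₀, s₀) := rfl
  have hq0U : X (r₀, s₀) ∈ U := (hgraph _ hmem).1
  have hφat : ContDiffAt ℝ 2 φ (X (r₀, s₀)) := hφ.contDiffAt (hU.mem_nhds hq0U)
  have hfd2 : DifferentiableAt ℝ (fderiv ℝ φ) (X (r₀, s₀)) :=
    (hφat.fderiv_right (m := 1) (by norm_num)).differentiableAt one_ne_zero
  set D2 : (ℝ × ℝ) →L[ℝ] ((ℝ × ℝ) →L[ℝ] ℝ) := fderiv ℝ (fderiv ℝ φ) (X (r₀, s₀)) with hD2def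
  have hpdx_d : HasFDerivAt (pdx φ) ((ContinuousLinearMap.apply ℝ ℝ ((1:ℝ),(0:ℝ))).comp D2)
      (X (r₀, s₀)) :=
    (ContinuousLinearMap.apply ℝ ℝ ((1:ℝ),(0:ℝ))).hasFDerivAt.comp (X (r₀, s₀)) hfd2.hasFDerivAt
  have hpdy_d : HasFDerivAt (pdy φ) ((ContinuousLinearMap.apply ℝ ℝ ((0:ℝ),(1:ℝ))).comp D2)
      (X (r₀, s₀)) :=
    (ContinuousLinearMap.apply ℝ ℝ ((0:ℝ),(1:ℝ))).hasFDerivAt.comp (X (r₀, s₀)) hfd2.hasFDerivAt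
  have hAeq : pdx (pdx φ) (X (r₀, s₀)) = (D2 (1, 0)) (1, 0) := by
    simp only [pdx]; rw [hpdx_d.fderiv]; simp
  have hBmeq : pdx (pdy φ) (X (r₀, s₀)) = (D2 (1, 0)) (0, 1) := by
    simp only [pdx, pdy]; rw [hpdy_d.fderiv]; simp
  have hCeq : pdy (pdy φ) (X (r₀, s₀)) = (D2 (0, 1)) (0, 1) := by
    simp only [pdy]; rw [hpdy_d.fderiv]; simp
  -- derivatives of the composed first partials
  have hcore1 : HasFDerivAt (fun p => pdx φ (X p))
      ((((ContinuousLinearMap.apply ℝ ℝ ((1:ℝ),(0:ℝ))).comp D2).comp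
        (((deriv F r₀ * (1 - r₀ ^ 2) / 2) • fst ℝ ℝ ℝ + (deriv G s₀ * (1 - s₀ ^ 2) / 2) • snd ℝ ℝ ℝ).prod
         ((-(deriv F r₀ * (1 + r₀ ^ 2)) / 2) • fst ℝ ℝ ℝ + (deriv G s₀ * (1 + s₀ ^ 2) / 2) • snd ℝ ℝ ℝ)))) (r₀, s₀) :=
    hpdx_d.comp (r₀, s₀) (hXd (r₀, s₀))
  have hcore2 : HasFDerivAt (fun p => pdy φ (X p))
      ((((ContinuousLinearMap.apply ℝ ℝ ((0:ℝ),(1:ℝ))).comp D2).comp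
        (((deriv F r₀ * (1 - r₀ ^ 2) / 2) • fst ℝ ℝ ℝ + (deriv G s₀ * (1 - s₀ ^ 2) / 2) • snd ℝ ℝ ℝ).prod
         ((-(deriv F r₀ * (1 + r₀ ^ 2)) / 2) • fst ℝ ℝ ℝ + (deriv G s₀ * (1 + s₀ ^ 2) / 2) • snd ℝ ℝ ℝ)))) (r₀, s₀) :=
    hpdy_d.comp (r₀, s₀) (hXd (r₀, s₀))
  have hpoly : HasFDerivAt (fun p : ℝ × ℝ => 1 - p.1 * p.2)
      (0 - (r₀ • snd ℝ ℝ ℝ + s₀ • fst ℝ ℝ ℝ)) (r₀, s₀) :=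
    by
    have h : HasFDerivAt (fun p : ℝ × ℝ => p.1 * p.2)
        (((r₀, s₀) : ℝ × ℝ).1 • snd ℝ ℝ ℝ + ((r₀, s₀) : ℝ × ℝ).2 • fst ℝ ℝ ℝ)
        ((r₀, s₀) : ℝ × ℝ) := hasFDerivAt_fst.mul hasFDerivAt_snd
    exact (hasFDerivAt_const (1 : ℝ) ((r₀, s₀) : ℝ × ℝ)).sub h
  have hg1 := hpoly.mul hcore1
  have hg2 := hpoly.mul hcore2
  have hev1 : (fun p : ℝ × ℝ => p.1 + p.2) =ᶠ[nhds (r₀, s₀)]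
      fun p => (1 - p.1 * p.2) * pdx φ (X p) :=
    Filter.eventuallyEq_of_mem (hNopen.mem_nhds hNmem) fun p hp => ((eqUV p hp).1).symm
  have hev2 : (fun p : ℝ × ℝ => p.2 - p.1) =ᶠ[nhds (r₀, s₀)]
      fun p => (1 - p.1 * p.2) * pdy φ (X p) :=
    Filter.eventuallyEq_of_mem (hNopen.mem_nhds hNmem) fun p hp => ((eqUV p hp).2).symm
  have hsum : HasFDerivAt (fun p : ℝ × ℝ => p.1 + p.2) (fst ℝ ℝ ℝ + snd ℝ ℝ ℝ) (r₀, s₀) :=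
    hasFDerivAt_fst.add hasFDerivAt_snd
  have hdif : HasFDerivAt (fun p : ℝ × ℝ => p.2 - p.1) (snd ℝ ℝ ℝ - fst ℝ ℝ ℝ) (r₀, s₀) :=
    hasFDerivAt_snd.sub hasFDerivAt_fst
  have hL1 := (hg1.congr_of_eventuallyEq hev1).unique hsum
  have hL2 := (hg2.congr_of_eventuallyEq hev2).unique hdif
  have e1 := DFunLike.congr_fun hL1 ((1:ℝ), (0:ℝ))
  have e2 := DFunLike.congr_fun hL1 ((0:ℝ), (1:ℝ))
  have e3 := DFunLike.congr_fun hL2 ((1:ℝ), (0:ℝ))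
  have e4 := DFunLike.congr_fun hL2 ((0:ℝ), (1:ℝ))
  simp only [ContinuousLinearMap.add_apply, ContinuousLinearMap.sub_apply,
    ContinuousLinearMap.comp_apply, ContinuousLinearMap.prod_apply,
    ContinuousLinearMap.coe_smul', Pi.smul_apply, ContinuousLinearMap.coe_fst',
    ContinuousLinearMap.coe_snd', ContinuousLinearMap.zero_apply,
    ContinuousLinearMap.apply_apply, ContinuousLinearMap.neg_apply, smul_eq_mul,
    mul_one, mul_zero, add_zero, zero_add, zero_sub, sub_zero] at e1 e2 e3 e4
  rw [hdec2] at e1 e2 e3 e4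
  obtain ⟨P0u, P0v⟩ := eqUV (r₀, s₀) hNmem
  have habs' := abs_lt.mp hrs
  have h1m : (1:ℝ) - r₀ * s₀ ≠ 0 := by intro h; linarith [habs'.2]
  have h1p : (1:ℝ) + r₀ * s₀ ≠ 0 := by intro h; linarith [habs'.1]
  have hE : (1:ℝ) - r₀ ^ 2 * s₀ ^ 2 ≠ 0 := by
    have h : (1:ℝ) - r₀ ^ 2 * s₀ ^ 2 = (1 - r₀ * s₀) * (1 + r₀ * s₀) := by ring
    rw [h]; exact mul_ne_zero h1m h1p
  have hM : deriv F r₀ * deriv G s₀ * (1 - r₀ * s₀) ^ 2 * (1 - r₀ ^ 2 * s₀ ^ 2) ≠ 0 :=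
    mul_ne_zero (mul_ne_zero (mul_ne_zero ha hb) (pow_ne_zero 2 h1m)) hE
  have hu' : pdx φ (X (r₀, s₀)) = (r₀ + s₀) / (1 - r₀ * s₀) := by
    rw [eq_div_iff h1m]; linear_combination P0u
  have hv' : pdy φ (X (r₀, s₀)) = (s₀ - r₀) / (1 - r₀ * s₀) := by
    rw [eq_div_iff h1m]; linear_combination P0v
  have TA : deriv F r₀ * deriv G s₀ * (1 - r₀ * s₀) ^ 2 * (1 - r₀ ^ 2 * s₀ ^ 2) * ((D2 (1, 0)) (1, 0))
      = deriv G s₀ * (1 + s₀ ^ 2) ^ 2 + deriv F r₀ * (1 + r₀ ^ 2) ^ 2 := by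
    linear_combination (deriv G s₀ * (1 + s₀ ^ 2) * (1 - r₀ * s₀)) * e1
      + (deriv F r₀ * (1 + r₀ ^ 2) * (1 - r₀ * s₀)) * e2
      + (s₀ * deriv G s₀ * (1 + s₀ ^ 2) + r₀ * deriv F r₀ * (1 + r₀ ^ 2)) * P0u
  have TB : deriv F r₀ * deriv G s₀ * (1 - r₀ * s₀) ^ 2 * (1 - r₀ ^ 2 * s₀ ^ 2) * ((D2 (1, 0)) (0, 1))
      = deriv F r₀ * (1 - r₀ ^ 4) - deriv G s₀ * (1 - s₀ ^ 4) := by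
    linear_combination (deriv G s₀ * (1 + s₀ ^ 2) * (1 - r₀ * s₀)) * e3
      + (deriv F r₀ * (1 + r₀ ^ 2) * (1 - r₀ * s₀)) * e4
      + (s₀ * deriv G s₀ * (1 + s₀ ^ 2) + r₀ * deriv F r₀ * (1 + r₀ ^ 2)) * P0v
  have TC : deriv F r₀ * deriv G s₀ * (1 - r₀ * s₀) ^ 2 * (1 - r₀ ^ 2 * s₀ ^ 2) * ((D2 (0, 1)) (0, 1))
      = deriv G s₀ * (1 - s₀ ^ 2) ^ 2 + deriv F r₀ * (1 - r₀ ^ 2) ^ 2 := by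
    linear_combination (-(deriv G s₀ * (1 - s₀ ^ 2) * (1 - r₀ * s₀))) * e3
      + (deriv F r₀ * (1 - r₀ ^ 2) * (1 - r₀ * s₀)) * e4
      + (r₀ * deriv F r₀ * (1 - r₀ ^ 2) - s₀ * deriv G s₀ * (1 - s₀ ^ 2)) * P0v
  have hA' : (D2 (1, 0)) (1, 0) = (deriv G s₀ * (1 + s₀ ^ 2) ^ 2 + deriv F r₀ * (1 + r₀ ^ 2) ^ 2)
      / (deriv F r₀ * deriv G s₀ * (1 - r₀ * s₀) ^ 2 * (1 - r₀ ^ 2 * s₀ ^ 2)) := by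
    rw [eq_div_iff hM]; linear_combination TA
  have hB' : (D2 (1, 0)) (0, 1) = (deriv F r₀ * (1 - r₀ ^ 4) - deriv G s₀ * (1 - s₀ ^ 4))
      / (deriv F r₀ * deriv G s₀ * (1 - r₀ * s₀) ^ 2 * (1 - r₀ ^ 2 * s₀ ^ 2)) := by
    rw [eq_div_iff hM]; linear_combination TB
  have hC' : (D2 (0, 1)) (0, 1) = (deriv G s₀ * (1 - s₀ ^ 2) ^ 2 + deriv F r₀ * (1 - r₀ ^ 2) ^ 2)
      / (deriv F r₀ * deriv G s₀ * (1 - r₀ * s₀) ^ 2 * (1 - r₀ ^ 2 * s₀ ^ 2)) := by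
    rw [eq_div_iff hM]; linear_combination TC
  constructor
  · rw [hqX, hu', hv']
    have hpos : (0:ℝ) < ((1 + r₀ * s₀) / (1 - r₀ * s₀)) ^ 2 :=
      lt_of_le_of_ne (sq_nonneg _) (Ne.symm (pow_ne_zero 2 (div_ne_zero h1p h1m)))
    have hval : 1 + ((r₀ + s₀) / (1 - r₀ * s₀)) ^ 2 - ((s₀ - r₀) / (1 - r₀ * s₀)) ^ 2
        = ((1 + r₀ * s₀) / (1 - r₀ * s₀)) ^ 2 := by field_simp; ring
    linarith [hval, hpos]
  · rw [hqX, hAeq, hBmeq, hCeq, hu', hv', hA', hB', hC']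
    have h1m' : (1:ℝ) - s₀ * r₀ ≠ 0 := by rwa [mul_comm]
    field_simp
    ring
end
end

section
/- Let I be an interval, c = (c₁,c₂,c₃) : I → ℝ³ a C¹ curve, and n = (n₁,n₂,n₃) : I → ℝ³ a map satisfying, for every t ∈ I: n₁(t)² − n₂(t)² + n₃(t)² = 1, n₃(t) < 0, and n₁c₁′ − n₂c₂′ + n₃c₃′ = 0 (n is a ⟨,⟩_B-unit normal orthogonal to c′). Define r(t) := (n₁+n₂)/(1−n₃) and s(t) := (n₁−n₂)/(1−n₃). Then for all t ∈ I: (i) 1 − r(t)²s(t)² = −4n₃(t)/(1−n₃(t))² > 0; and (ii) setting A(t) := [s²(c₁′+c₂′) + (c₁′−c₂′)]/(1 − r²s²) and B(t) := [(c₁′+c₂′) + r²(c₁′−c₂′)]/(1 − r²s²), one has c₃′(t) = r(t)A(t) + s(t)B(t). (Thus the equations determining F′(r(t))r′(t) = A(t) and G′(s(t))s′(t) = B(t) in the Barbashov–Chernikov representation are consistent with the third Björling equation.) -/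
/-- Consistency of the Barbashov–Chernikov Björling equations: if `n` is a
`⟨,⟩_B`-unit field with `n₃ < 0` orthogonal to `c′`, and
`r = (n₁+n₂)/(1−n₃)`, `s = (n₁−n₂)/(1−n₃)`, then `1 − r²s² = −4n₃/(1−n₃)² > 0`
and `c₃′ = rA + sB` where `A = (s²(c₁′+c₂′)+(c₁′−c₂′))/(1−r²s²)` and
`B = ((c₁′+c₂′)+r²(c₁′−c₂′))/(1−r²s²)`. -/
theorem bjorling_equations_consistent
    (I : Set ℝ) (hI : I.OrdConnected)
    (c₁ c₂ c₃ : ℝ → ℝ) (c₁' c₂' c₃' : ℝ → ℝ)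
    (hc₁ : ∀ t ∈ I, HasDerivAt c₁ (c₁' t) t)
    (hc₂ : ∀ t ∈ I, HasDerivAt c₂ (c₂' t) t)
    (hc₃ : ∀ t ∈ I, HasDerivAt c₃ (c₃' t) t)
    (n₁ n₂ n₃ : ℝ → ℝ)
    (hunit : ∀ t ∈ I, (n₁ t) ^ 2 - (n₂ t) ^ 2 + (n₃ t) ^ 2 = 1)
    (hneg : ∀ t ∈ I, n₃ t < 0)
    (horth : ∀ t ∈ I, n₁ t * c₁' t - n₂ t * c₂' t + n₃ t * c₃' t = 0) :
    ∀ t ∈ I,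
      let r : ℝ := (n₁ t + n₂ t) / (1 - n₃ t)
      let s : ℝ := (n₁ t - n₂ t) / (1 - n₃ t)
      let A : ℝ := (s ^ 2 * (c₁' t + c₂' t) + (c₁' t - c₂' t)) / (1 - r ^ 2 * s ^ 2)
      let B : ℝ := ((c₁' t + c₂' t) + r ^ 2 * (c₁' t - c₂' t)) / (1 - r ^ 2 * s ^ 2)
      (1 - r ^ 2 * s ^ 2 = -4 * n₃ t / (1 - n₃ t) ^ 2 ∧ 0 < 1 - r ^ 2 * s ^ 2) ∧
      c₃' t = r * A + s * B := by
  intro t ht r s A B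
  have hu := hunit t ht
  have hn := hneg t ht
  have ho := horth t ht
  have hd : (1 : ℝ) - n₃ t > 0 := by linarith
  have hd' : (1 : ℝ) - n₃ t ≠ 0 := ne_of_gt hd
  have key : 1 - r ^ 2 * s ^ 2 = -4 * n₃ t / (1 - n₃ t) ^ 2 := by
    show 1 - ((n₁ t + n₂ t) / (1 - n₃ t)) ^ 2 * ((n₁ t - n₂ t) / (1 - n₃ t)) ^ 2 = _
    have h4 : ((1 - n₃ t) ^ 2) ≠ 0 := pow_ne_zero _ hd'
    field_simp
    linear_combination (-(1 - n₃ t ^ 2 + n₁ t ^ 2 - n₂ t ^ 2)) * hu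
  have hpos : 0 < 1 - r ^ 2 * s ^ 2 := by
    rw [key]
    apply div_pos (by linarith) (by positivity)
  refine ⟨⟨key, hpos⟩, ?_⟩
  have hD : (1 : ℝ) - r ^ 2 * s ^ 2 ≠ 0 := ne_of_gt hpos
  show c₃' t = r * ((s ^ 2 * (c₁' t + c₂' t) + (c₁' t - c₂' t)) / (1 - r ^ 2 * s ^ 2))
      + s * (((c₁' t + c₂' t) + r ^ 2 * (c₁' t - c₂' t)) / (1 - r ^ 2 * s ^ 2))
  have hn3 : n₃ t ≠ 0 := ne_of_lt hn
  have hc3 : c₃' t = (n₂ t * c₂' t - n₁ t * c₁' t) / n₃ t := by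
    field_simp
    linarith [ho]
  rw [mul_div_assoc', mul_div_assoc', ← add_div, eq_div_iff hD]
  show c₃' t * (1 - r ^ 2 * s ^ 2) = _
  show _ = ((n₁ t + n₂ t) / (1 - n₃ t)) * (((n₁ t - n₂ t) / (1 - n₃ t)) ^ 2 * (c₁' t + c₂' t) + (c₁' t - c₂' t))
      + ((n₁ t - n₂ t) / (1 - n₃ t)) * ((c₁' t + c₂' t) + ((n₁ t + n₂ t) / (1 - n₃ t)) ^ 2 * (c₁' t - c₂' t))
  show c₃' t * (1 - ((n₁ t + n₂ t) / (1 - n₃ t)) ^ 2 * ((n₁ t - n₂ t) / (1 - n₃ t)) ^ 2) = _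
  have h2 : c₃' t * n₃ t * ((1 - n₃ t) ^ 4 - (n₁ t ^ 2 - n₂ t ^ 2) ^ 2) =
      n₃ t * (1 - n₃ t) *
      ((n₁ t + n₂ t) * ((n₁ t - n₂ t) ^ 2 * (c₁' t + c₂' t) + (1 - n₃ t) ^ 2 * (c₁' t - c₂' t))
      + (n₁ t - n₂ t) * ((1 - n₃ t) ^ 2 * (c₁' t + c₂' t) + (n₁ t + n₂ t) ^ 2 * (c₁' t - c₂' t))) := by
    linear_combination (((1 - n₃ t) ^ 4 - (n₁ t ^ 2 - n₂ t ^ 2) ^ 2)) * ho +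
      ((n₁ t * c₁' t - n₂ t * c₂' t) * (n₁ t ^ 2 - n₂ t ^ 2 + (1 - n₃ t) ^ 2)) * hu
  have h3 : c₃' t * ((1 - n₃ t) ^ 4 - (n₁ t ^ 2 - n₂ t ^ 2) ^ 2) =
      (1 - n₃ t) *
      ((n₁ t + n₂ t) * ((n₁ t - n₂ t) ^ 2 * (c₁' t + c₂' t) + (1 - n₃ t) ^ 2 * (c₁' t - c₂' t))
      + (n₁ t - n₂ t) * ((1 - n₃ t) ^ 2 * (c₁' t + c₂' t) + (n₁ t + n₂ t) ^ 2 * (c₁' t - c₂' t))) :=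
    mul_left_cancel₀ hn3 (by linear_combination h2)
  have e1 : (1 : ℝ) - ((n₁ t + n₂ t) / (1 - n₃ t)) ^ 2 * ((n₁ t - n₂ t) / (1 - n₃ t)) ^ 2 =
      ((1 - n₃ t) ^ 4 - (n₁ t ^ 2 - n₂ t ^ 2) ^ 2) / (1 - n₃ t) ^ 4 := by
    field_simp
    ring
  have e2 : ((n₁ t + n₂ t) / (1 - n₃ t)) * (((n₁ t - n₂ t) / (1 - n₃ t)) ^ 2 * (c₁' t + c₂' t) + (c₁' t - c₂' t))
      + ((n₁ t - n₂ t) / (1 - n₃ t)) * ((c₁' t + c₂' t) + ((n₁ t + n₂ t) / (1 - n₃ t)) ^ 2 * (c₁' t - c₂' t)) =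
      ((n₁ t + n₂ t) * ((n₁ t - n₂ t) ^ 2 * (c₁' t + c₂' t) + (1 - n₃ t) ^ 2 * (c₁' t - c₂' t))
      + (n₁ t - n₂ t) * ((1 - n₃ t) ^ 2 * (c₁' t + c₂' t) + (n₁ t + n₂ t) ^ 2 * (c₁' t - c₂' t))) / (1 - n₃ t) ^ 3 := by
    field_simp
  rw [e1, e2, mul_div_assoc', div_eq_div_iff (pow_ne_zero 4 hd') (pow_ne_zero 3 hd')]
  linear_combination (1 - n₃ t) ^ 3 * h3
end

section
/- There exist a nonempty connected open set Ω ⊆ ℝ², C² maps Y, Ỹ : Ω → ℝ³ (in coordinates (α,β)), and real numbers a < b with [a,b] × {0} ⊆ Ω, such that: (i) on all of Ω both Y and Ỹ satisfy ⟨Y_α, Y_α⟩_L > 0, ⟨Y_α, Y_α⟩_L = −⟨Y_β, Y_β⟩_L, ⟨Y_α, Y_β⟩_L = 0, and Y_αα − Y_ββ = 0 (i.e., both are regular timelike minimal surfaces in conformal parameters); (ii) Y = Ỹ on an open neighborhood of [a,b] × {0} in Ω (so they solve the same Björling problem, containing the same curve α ↦ Y(α,0) with the same unit normal along it); and (iii)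 Y ≠ Ỹ on Ω. Hence two timelike minimal surfaces solving the same Björling problem need not agree on the intersection of their domains. -/
noncomputable section

/-- The inner product of Lorentz–Minkowski space `L³`:
`⟨v,w⟩_L = v₁w₁ + v₂w₂ − v₃w₃`. -/
def innL (v w : ℝ × ℝ × ℝ) : ℝ := v.1 * w.1 + v.2.1 * w.2.1 - v.2.2 * w.2.2

/-! ### Auxiliary: the truncated power functions `pp k` -/

/-- `pp k u = (u⁺)^k`, the positive part of `u` raised to the `k`-th power. -/
def pp (k : ℕ) (u : ℝ) : ℝ := if u ≤ 0 then 0 else u ^ k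

lemma pp_of_nonpos {k : ℕ} {u : ℝ} (h : u ≤ 0) : pp k u = 0 := if_pos h

lemma pp_of_pos {k : ℕ} {u : ℝ} (h : 0 < u) : pp k u = u ^ k := if_neg (not_le.mpr h)

lemma pp_mul {a b : ℕ} (u : ℝ) : pp a u * pp b u = pp (a + b) u := by
  unfold pp; split_ifs with h
  · ring
  · rw [pow_add]

lemma pp_cont (k : ℕ) (hk : 1 ≤ k) : Continuous (pp k) := by
  unfold pp
  apply Continuous.if_le continuous_const (continuous_pow k) continuous_id continuous_const
  intro x hx
  simp only [id] at hx
  subst hx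
  simp [zero_pow (by omega : k ≠ 0)]

lemma pp_hasDerivAt (k : ℕ) (hk : 1 ≤ k) (u : ℝ) :
    HasDerivAt (pp (k + 1)) ((k + 1) * pp k u) u := by
  rcases lt_trichotomy u 0 with h | h | h
  · have he : pp (k + 1) =ᶠ[nhds u] fun _ => (0 : ℝ) := by
      filter_upwards [Iio_mem_nhds h] with y hy
      exact pp_of_nonpos (le_of_lt hy)
    have := (hasDerivAt_const u (0 : ℝ)).congr_of_eventuallyEq he
    simpa [pp_of_nonpos (le_of_lt h)] using this
  · subst h
    rw [hasDerivAt_iff_tendsto_slope]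
    have heq : ∀ y : ℝ, y ≠ 0 → slope (pp (k + 1)) 0 y = pp k y := by
      intro y hy
      rw [slope_def_field]
      rcases lt_or_gt_of_ne hy with h' | h'
      · rw [pp_of_nonpos (le_of_lt h'), pp_of_nonpos (le_of_lt h'),
          pp_of_nonpos (le_refl (0:ℝ))]; simp
      · rw [pp_of_pos h', pp_of_pos h', pp_of_nonpos (le_refl (0:ℝ)), pow_succ]
        field_simp; ring
    have h2 : Filter.Tendsto (pp k) (nhdsWithin 0 {(0:ℝ)}ᶜ) (nhds ((k + 1 : ℝ) * pp k 0)) := by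
      rw [pp_of_nonpos (le_refl (0:ℝ)), mul_zero]
      have := ((pp_cont k hk).tendsto 0).mono_left (nhdsWithin_le_nhds (s := {(0:ℝ)}ᶜ))
      simpa [pp_of_nonpos (le_refl (0:ℝ))] using this
    refine h2.congr' ?_
    filter_upwards [self_mem_nhdsWithin] with y hy
    exact (heq y hy).symm
  · have he : pp (k + 1) =ᶠ[nhds u] fun y => y ^ (k + 1) := by
      filter_upwards [Ioi_mem_nhds h] with y hy
      exact pp_of_pos hy
    have := ((hasDerivAt_pow (k + 1) u)).congr_of_eventuallyEq he
    simpa [pp_of_pos h] using this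

lemma pp_deriv (k : ℕ) (hk : 1 ≤ k) :
    deriv (pp (k + 1)) = fun u => (k + 1) * pp k u :=
  funext fun u => (pp_hasDerivAt k hk u).deriv

lemma pp_contDiff : ∀ (n : ℕ) (k : ℕ), 1 ≤ k → ContDiff ℝ n (pp (k + n))
  | 0, k, hk => by
      rw [Nat.add_zero]
      exact contDiff_zero.mpr (pp_cont k hk)
  | (n + 1), k, hk => by
      have h1 : ContDiff ℝ n (pp (k + n)) := pp_contDiff n k hk
      have : ((n : WithTop ℕ∞) + 1) = ((n + 1 : ℕ) : WithTop ℕ∞) := by push_cast; ring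
      rw [← this, contDiff_succ_iff_deriv]
      refine ⟨fun u => ((pp_hasDerivAt (k + n) (by omega) u).differentiableAt), by simp, ?_⟩
      rw [show k + (n + 1) = (k + n) + 1 by ring, pp_deriv (k + n) (by omega)]
      exact contDiff_const.mul h1

/-! ### The two surfaces -/

/-- The nontrivial timelike minimal surface, built from the null curve
`A'(u) = (1 - h(u)², 2h(u), 1 + h(u)²)` with `h = pp 3`, and `B'(v) = (1,0,-1)`. -/
def YY : ℝ × ℝ → ℝ × ℝ × ℝ := fun p =>
  (2 * p.1 - (1/7) * pp 7 (p.1 + p.2),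
   (1/2) * pp 4 (p.1 + p.2),
   2 * p.2 + (1/7) * pp 7 (p.1 + p.2))

/-- The plane, the trivial solution of the same Björling problem. -/
def YT : ℝ × ℝ → ℝ × ℝ × ℝ := fun p => (2 * p.1, 0, 2 * p.2)

def Yx : ℝ × ℝ → ℝ × ℝ × ℝ := fun p =>
  (2 - pp 6 (p.1 + p.2), 2 * pp 3 (p.1 + p.2), pp 6 (p.1 + p.2))

def Yy : ℝ × ℝ → ℝ × ℝ × ℝ := fun p =>
  (-pp 6 (p.1 + p.2), 2 * pp 3 (p.1 + p.2), 2 + pp 6 (p.1 + p.2))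

open ContinuousLinearMap in
lemma hs_fderiv (p : ℝ × ℝ) : HasFDerivAt (fun q : ℝ × ℝ => q.1 + q.2)
    ((fst ℝ ℝ ℝ) + (snd ℝ ℝ ℝ)) p := (hasFDerivAt_fst).add (hasFDerivAt_snd)

open ContinuousLinearMap in
lemma hpp_fderiv (k : ℕ) (hk : 1 ≤ k) (p : ℝ × ℝ) :
    HasFDerivAt (fun q : ℝ × ℝ => pp (k + 1) (q.1 + q.2))
      ((((k : ℝ) + 1) * pp k (p.1 + p.2)) • ((fst ℝ ℝ ℝ) + (snd ℝ ℝ ℝ))) p :=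
  by have := (pp_hasDerivAt k hk (p.1 + p.2)).comp_hasFDerivAt p (hs_fderiv p); exact this

lemma vdx_YY (p : ℝ × ℝ) : vdx YY p = Yx p := by
  have h7 := hpp_fderiv 6 (by norm_num) p
  have h4 := hpp_fderiv 3 (by norm_num) p
  norm_num at h7 h4
  have h1 : HasFDerivAt (fun q : ℝ × ℝ => 2 * q.1 - (1/7) * pp 7 (q.1 + q.2)) _ p :=
    ((hasFDerivAt_fst).const_mul (2:ℝ)).sub (h7.const_mul (1/7 : ℝ))
  have h2 : HasFDerivAt (fun q : ℝ × ℝ => (1/2 : ℝ) * pp 4 (q.1 + q.2)) _ p :=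
    h4.const_mul (1/2 : ℝ)
  have h3 : HasFDerivAt (fun q : ℝ × ℝ => 2 * q.2 + (1/7) * pp 7 (q.1 + q.2)) _ p :=
    ((hasFDerivAt_snd).const_mul (2:ℝ)).add (h7.const_mul (1/7 : ℝ))
  have hY : HasFDerivAt YY _ p := h1.prodMk (h2.prodMk h3)
  rw [vdx, hY.fderiv]
  simp [Yx] <;> ring

lemma vdy_YY (p : ℝ × ℝ) : vdy YY p = Yy p := by
  have h7 := hpp_fderiv 6 (by norm_num) p
  have h4 := hpp_fderiv 3 (by norm_num) p
  norm_num at h7 h4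
  have h1 : HasFDerivAt (fun q : ℝ × ℝ => 2 * q.1 - (1/7) * pp 7 (q.1 + q.2)) _ p :=
    ((hasFDerivAt_fst).const_mul (2:ℝ)).sub (h7.const_mul (1/7 : ℝ))
  have h2 : HasFDerivAt (fun q : ℝ × ℝ => (1/2 : ℝ) * pp 4 (q.1 + q.2)) _ p :=
    h4.const_mul (1/2 : ℝ)
  have h3 : HasFDerivAt (fun q : ℝ × ℝ => 2 * q.2 + (1/7) * pp 7 (q.1 + q.2)) _ p :=
    ((hasFDerivAt_snd).const_mul (2:ℝ)).add (h7.const_mul (1/7 : ℝ))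
  have hY : HasFDerivAt YY _ p := h1.prodMk (h2.prodMk h3)
  rw [vdy, hY.fderiv]
  simp [Yy] <;> ring

lemma vdx_Yx (p : ℝ × ℝ) :
    vdx Yx p = (-(6 * pp 5 (p.1 + p.2)), 6 * pp 2 (p.1 + p.2), 6 * pp 5 (p.1 + p.2)) := by
  have h6 := hpp_fderiv 5 (by norm_num) p
  have h3 := hpp_fderiv 2 (by norm_num) p
  norm_num at h6 h3
  have h1 : HasFDerivAt (fun q : ℝ × ℝ => 2 - pp 6 (q.1 + q.2)) _ p :=
    (hasFDerivAt_const (2:ℝ) p).sub h6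
  have h2 : HasFDerivAt (fun q : ℝ × ℝ => 2 * pp 3 (q.1 + q.2)) _ p :=
    h3.const_mul (2:ℝ)
  have hY : HasFDerivAt Yx _ p := h1.prodMk (h2.prodMk h6)
  rw [vdx, hY.fderiv]
  simp <;> ring

lemma vdy_Yy (p : ℝ × ℝ) :
    vdy Yy p = (-(6 * pp 5 (p.1 + p.2)), 6 * pp 2 (p.1 + p.2), 6 * pp 5 (p.1 + p.2)) := by
  have h6 := hpp_fderiv 5 (by norm_num) p
  have h3 := hpp_fderiv 2 (by norm_num) p
  norm_num at h6 h3
  have h1 : HasFDerivAt (fun q : ℝ × ℝ => -pp 6 (q.1 + q.2)) _ p := h6.neg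
  have h2 : HasFDerivAt (fun q : ℝ × ℝ => 2 * pp 3 (q.1 + q.2)) _ p :=
    h3.const_mul (2:ℝ)
  have h4 : HasFDerivAt (fun q : ℝ × ℝ => 2 + pp 6 (q.1 + q.2)) _ p :=
    (hasFDerivAt_const (2:ℝ) p).add h6
  have hY : HasFDerivAt Yy _ p := h1.prodMk (h2.prodMk h4)
  rw [vdy, hY.fderiv]
  simp <;> ring

lemma cd2 (k m : ℕ) (hk : k = m + 1 + 2) : ContDiff ℝ 2 (pp k) := by
  subst hk
  have := pp_contDiff 2 (m + 1) (by omega)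
  exact_mod_cast this


lemma contDiff_YY : ContDiff ℝ 2 YY := by
  have hs : ContDiff ℝ 2 (fun q : ℝ × ℝ => q.1 + q.2) := contDiff_fst.add contDiff_snd
  have h7 : ContDiff ℝ 2 (fun q : ℝ × ℝ => pp 7 (q.1 + q.2)) := (cd2 7 4 rfl).comp hs
  have h4 : ContDiff ℝ 2 (fun q : ℝ × ℝ => pp 4 (q.1 + q.2)) := (cd2 4 1 rfl).comp hs
  refine ContDiff.prodMk ?_ (ContDiff.prodMk ?_ ?_)
  · exact ((contDiff_const.mul contDiff_fst).sub (contDiff_const.mul h7))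
  · exact contDiff_const.mul h4
  · exact ((contDiff_const.mul contDiff_snd).add (contDiff_const.mul h7))

lemma contDiff_YT : ContDiff ℝ 2 YT :=
  ContDiff.prodMk (contDiff_const.mul contDiff_fst)
    (ContDiff.prodMk contDiff_const (contDiff_const.mul contDiff_snd))

lemma vdx_YT (p : ℝ × ℝ) : vdx YT p = (2, 0, 0) := by
  have hY : HasFDerivAt YT _ p :=
    ((hasFDerivAt_fst (𝕜 := ℝ)).const_mul (2:ℝ)).prodMk
      ((hasFDerivAt_const (0:ℝ) p).prodMk ((hasFDerivAt_snd (𝕜 := ℝ)).const_mul (2:ℝ)))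
  rw [vdx, hY.fderiv]
  simp

lemma vdy_YT (p : ℝ × ℝ) : vdy YT p = (0, 0, 2) := by
  have hY : HasFDerivAt YT _ p :=
    ((hasFDerivAt_fst (𝕜 := ℝ)).const_mul (2:ℝ)).prodMk
      ((hasFDerivAt_const (0:ℝ) p).prodMk ((hasFDerivAt_snd (𝕜 := ℝ)).const_mul (2:ℝ)))
  rw [vdy, hY.fderiv]
  simp


/-- Non-uniqueness of the solution to the Björling problem for timelike minimal
surfaces: there exist two regular timelike minimal surfaces in conformal
parameters, defined on a common connected open domain, which agree on a
neighborhood of a segment `[a,b] × {0}` (hence contain the same curve with the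
same unit normal along it, i.e. solve the same Björling problem) but do not
agree on the whole domain. -/
theorem bjorling_timelike_minimal_not_unique :
    ∃ (Ω : Set (ℝ × ℝ)) (Y Ytilde : ℝ × ℝ → ℝ × ℝ × ℝ) (a b : ℝ),
      Ω.Nonempty ∧ IsOpen Ω ∧ IsConnected Ω ∧
      ContDiffOn ℝ 2 Y Ω ∧ ContDiffOn ℝ 2 Ytilde Ω ∧
      a < b ∧ (Set.Icc a b ×ˢ ({0} : Set ℝ)) ⊆ Ω ∧
      (∀ p ∈ Ω,
        0 < innL (vdx Y p) (vdx Y p) ∧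
        innL (vdx Y p) (vdx Y p) = -innL (vdy Y p) (vdy Y p) ∧
        innL (vdx Y p) (vdy Y p) = 0 ∧
        vdx (vdx Y) p - vdy (vdy Y) p = 0) ∧
      (∀ p ∈ Ω,
        0 < innL (vdx Ytilde p) (vdx Ytilde p) ∧
        innL (vdx Ytilde p) (vdx Ytilde p) = -innL (vdy Ytilde p) (vdy Ytilde p) ∧
        innL (vdx Ytilde p) (vdy Ytilde p) = 0 ∧
        vdx (vdx Ytilde) p - vdy (vdy Ytilde) p = 0) ∧
      (∃ V : Set (ℝ × ℝ), IsOpen V ∧ (Set.Icc a b ×ˢ ({0} : Set ℝ)) ⊆ V ∧ V ⊆ Ω ∧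
        Set.EqOn Y Ytilde V) ∧
      ¬ Set.EqOn Y Ytilde Ω := by
  have hpos : ∀ p : ℝ × ℝ,
      0 < innL (vdx YY p) (vdx YY p) ∧
      innL (vdx YY p) (vdx YY p) = -innL (vdy YY p) (vdy YY p) ∧
      innL (vdx YY p) (vdy YY p) = 0 ∧
      vdx (vdx YY) p - vdy (vdy YY) p = 0 := by
    intro p
    have he : pp 3 (p.1+p.2) * pp 3 (p.1+p.2) = pp 6 (p.1+p.2) := pp_mul _
    rw [vdx_YY, vdy_YY]
    have h4 : innL (Yx p) (Yx p) = 4 := by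
      simp only [innL, Yx]; linear_combination 4 * he
    refine ⟨by rw [h4]; norm_num, ?_, ?_, ?_⟩
    · rw [h4]; simp only [innL, Yy]; linear_combination (4:ℝ) * he
    · simp only [innL, Yx, Yy]; linear_combination 4 * he
    · rw [show vdx YY = Yx from funext vdx_YY, show vdy YY = Yy from funext vdy_YY,
        vdx_Yx, vdy_Yy]
      simp
  refine ⟨Set.univ, YY, YT, -2, -1, Set.univ_nonempty, isOpen_univ, isConnected_univ,
    contDiff_YY.contDiffOn, contDiff_YT.contDiffOn, by norm_num, Set.subset_univ _,
    fun p _ => hpos p, ?_, ?_, ?_⟩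
  · intro p _
    rw [show vdx YT = fun _ => ((2:ℝ),(0:ℝ),(0:ℝ)) from funext vdx_YT,
      show vdy YT = fun _ => ((0:ℝ),(0:ℝ),(2:ℝ)) from funext vdy_YT] at *
    refine ⟨by norm_num [innL], by norm_num [innL], by norm_num [innL], ?_⟩
    simp [vdx, vdy, fderiv_const]
  · refine ⟨{p : ℝ × ℝ | p.1 + p.2 < 0}, isOpen_lt (continuous_fst.add continuous_snd)
      continuous_const, ?_, Set.subset_univ _, ?_⟩
    · rintro ⟨x, y⟩ hp
      obtain ⟨hx, hy⟩ := hp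
      simp only [Set.mem_singleton_iff] at hy
      have hx1 : x ≤ -1 := hx.2
      simp only [Set.mem_setOf_eq]
      subst hy
      linarith
    · intro p hp
      have h : p.1 + p.2 ≤ 0 := le_of_lt hp
      simp [YY, YT, pp_of_nonpos h]
  · intro h
    have := h (Set.mem_univ ((1:ℝ), (0:ℝ)))
    have h2 := congrArg (fun v : ℝ × ℝ × ℝ => v.2.1) this
    simp only [YY, YT] at h2
    rw [pp_of_pos (by norm_num : (0:ℝ) < (1:ℝ) + 0)] at h2
    norm_num at h2
end
end

section
/- There exist open sets Ω₁, Ω₂ ⊆ ℝ² with Ω₁ ∩ Ω₂ nonempty and connected, BI solitons φ : Ω₁ → ℝ and φ̃ : Ω₂ → ℝ, and a nonconstant C¹ curve γ : [a,b] → Ω₁ ∩ Ω₂, such that φ(γ(t)) = φ̃(γ(t)) and (φ_x, φ_y)(γ(t)) = (φ̃_x, φ̃_y)(γ(t)) for all t ∈ [a,b] (so the two BI soliton surfaces (x,y,φ) and (x,y,φ̃) contain the same curve and have the same unit normal along it, i.e., they solve the same Björling problem), and yet φ ≠ φ̃ on Ω₁ ∩ Ω₂. Hence the solution of the Björling problem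 for BI soliton surfaces is not unique. -/
noncomputable section

private def BIL : ℝ × ℝ →L[ℝ] ℝ :=
  ContinuousLinearMap.fst ℝ ℝ ℝ + ContinuousLinearMap.snd ℝ ℝ ℝ

private lemma bi_hs (p : ℝ × ℝ) : HasFDerivAt (fun q : ℝ × ℝ => q.1 + q.2) BIL p :=
  hasFDerivAt_fst.add hasFDerivAt_snd

private lemma bi_hsq (p : ℝ × ℝ) :
    HasFDerivAt (fun q : ℝ × ℝ => (q.1 + q.2) * (q.1 + q.2))
      ((p.1 + p.2) • BIL + (p.1 + p.2) • BIL) p := (bi_hs p).mul (bi_hs p)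

private lemma bi_pdx_sq (p : ℝ × ℝ) :
    pdx (fun q : ℝ × ℝ => (q.1 + q.2) * (q.1 + q.2)) p = 2 * (p.1 + p.2) := by
  simp [pdx, (bi_hsq p).fderiv, BIL]; ring

private lemma bi_pdy_sq (p : ℝ × ℝ) :
    pdy (fun q : ℝ × ℝ => (q.1 + q.2) * (q.1 + q.2)) p = 2 * (p.1 + p.2) := by
  simp [pdy, (bi_hsq p).fderiv, BIL]; ring

private lemma bi_hlin (p : ℝ × ℝ) :
    HasFDerivAt (fun q : ℝ × ℝ => 2 * (q.1 + q.2)) ((2 : ℝ) • BIL) p :=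
  ((bi_hs p).const_mul 2)

private lemma bi_pdx_lin (p : ℝ × ℝ) :
    pdx (fun q : ℝ × ℝ => 2 * (q.1 + q.2)) p = 2 := by
  simp [pdx, (bi_hlin p).fderiv, BIL]

private lemma bi_pdy_lin (p : ℝ × ℝ) :
    pdy (fun q : ℝ × ℝ => 2 * (q.1 + q.2)) p = 2 := by
  simp [pdy, (bi_hlin p).fderiv, BIL]

private lemma bi_pdx_zero (p : ℝ × ℝ) : pdx (fun _ : ℝ × ℝ => (0 : ℝ)) p = 0 := by
  simp [pdx]

private lemma bi_pdy_zero (p : ℝ × ℝ) : pdy (fun _ : ℝ × ℝ => (0 : ℝ)) p = 0 := by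
  simp [pdy]

/-- Non-uniqueness of the solution to the Björling problem for BI soliton
surfaces: there exist two BI solitons `φ`, `φ̃` whose graphs contain the same
(nonconstant) curve with the same unit normal along it, yet `φ ≠ φ̃` on the
(connected) intersection of their domains. -/
theorem bjorling_bi_soliton_not_unique :
    ∃ (Ω₁ Ω₂ : Set (ℝ × ℝ)) (φ φtilde : ℝ × ℝ → ℝ) (a b : ℝ) (γ : ℝ → ℝ × ℝ),
      IsOpen Ω₁ ∧ IsOpen Ω₂ ∧ (Ω₁ ∩ Ω₂).Nonempty ∧ IsConnected (Ω₁ ∩ Ω₂) ∧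
      ContDiffOn ℝ 2 φ Ω₁ ∧
      (∀ p ∈ Ω₁, 0 < 1 + (pdx φ p) ^ 2 - (pdy φ p) ^ 2) ∧
      (∀ p ∈ Ω₁, (1 - (pdy φ p) ^ 2) * pdx (pdx φ) p
        + 2 * pdx φ p * pdy φ p * pdx (pdy φ) p
        - (1 + (pdx φ p) ^ 2) * pdy (pdy φ) p = 0) ∧
      ContDiffOn ℝ 2 φtilde Ω₂ ∧
      (∀ p ∈ Ω₂, 0 < 1 + (pdx φtilde p) ^ 2 - (pdy φtilde p) ^ 2) ∧
      (∀ p ∈ Ω₂, (1 - (pdy φtilde p) ^ 2) * pdx (pdx φtilde) p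
        + 2 * pdx φtilde p * pdy φtilde p * pdx (pdy φtilde) p
        - (1 + (pdx φtilde p) ^ 2) * pdy (pdy φtilde) p = 0) ∧
      a < b ∧ ContDiffOn ℝ 1 γ (Set.Icc a b) ∧
      (∀ t ∈ Set.Icc a b, γ t ∈ Ω₁ ∩ Ω₂) ∧
      (∃ t₁ ∈ Set.Icc a b, ∃ t₂ ∈ Set.Icc a b, γ t₁ ≠ γ t₂) ∧
      (∀ t ∈ Set.Icc a b,
        φ (γ t) = φtilde (γ t) ∧
        pdx φ (γ t) = pdx φtilde (γ t) ∧
        pdy φ (γ t) = pdy φtilde (γ t)) ∧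
      ¬ Set.EqOn φ φtilde (Ω₁ ∩ Ω₂) := by
  refine ⟨Set.univ, Set.univ, (fun _ => 0), (fun q => (q.1 + q.2) * (q.1 + q.2)),
    0, 1, (fun t => (t, -t)), isOpen_univ, isOpen_univ, ⟨(0, 0), by simp⟩, ?_,
    contDiffOn_const, ?_, ?_, ?_, ?_, ?_, one_pos, ?_, fun t _ => by simp, ?_, ?_, ?_⟩
  · simpa using isConnected_univ
  · intro p _
    rw [bi_pdx_zero, bi_pdy_zero]; norm_num
  · intro p _
    have h1 : pdx (fun _ : ℝ × ℝ => (0 : ℝ)) = fun _ => (0 : ℝ) := funext bi_pdx_zero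
    have h2 : pdy (fun _ : ℝ × ℝ => (0 : ℝ)) = fun _ => (0 : ℝ) := funext bi_pdy_zero
    rw [h1, h2, bi_pdx_zero, bi_pdy_zero]
    ring
  · exact (((contDiff_fst.add contDiff_snd).mul (contDiff_fst.add contDiff_snd)).contDiffOn)
  · intro p _
    rw [bi_pdx_sq, bi_pdy_sq]; norm_num
  · intro p _
    have h1 : pdx (fun q : ℝ × ℝ => (q.1 + q.2) * (q.1 + q.2))
        = fun q => 2 * (q.1 + q.2) := funext bi_pdx_sq
    have h2 : pdy (fun q : ℝ × ℝ => (q.1 + q.2) * (q.1 + q.2))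
        = fun q => 2 * (q.1 + q.2) := funext bi_pdy_sq
    rw [h1, h2]
    simp only [bi_pdx_lin, bi_pdy_lin]
    ring
  · exact (contDiff_id.prodMk contDiff_id.neg).contDiffOn
  · exact ⟨0, by norm_num, 1, by norm_num, by norm_num [Prod.ext_iff]⟩
  · intro t _
    refine ⟨by simp, ?_, ?_⟩
    · rw [bi_pdx_zero, bi_pdx_sq]; simp
    · rw [bi_pdy_zero, bi_pdy_sq]; simp
  · intro h
    have := h (show ((1 : ℝ), (0 : ℝ)) ∈ Set.univ ∩ Set.univ by simp)
    norm_num at this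
end
end
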